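/- arXiv:2010.00701 — 2 statements merged into one kernel-verified Lean document; each statement's English description precedes it below -/
import Mathlib

section
/- Let μ and (μ_n) be admissible Borel probability measures on the space Γ of lines of the plane. If μ_n converges weakly to μ, then for every compact set K ⊆ ℝ², the pseudo-distances d_{μ_n} converge to d_μ uniformly on K × K; that is, sup over x, y ∈ K of |d_{μ_n}(x,y) − d_μ(x,y)| tends to 0 as n → ∞. -/
noncomputable section

open MeasureTheory Real

instance : MeasurableSpace Real.Angle :=
  inferInstanceAs (MeasurableSpace (AddCircle (2 * π)))

/-- The space `Γ = (ℝ/2πℤ) × ℝ` parameterizing the lines of the Euclidean plane. -/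
abbrev LineSpace : Type := Real.Angle × ℝ

/-- The line `ℓ(θ, p) = {z : z₁ sin θ − z₂ cos θ = p}` corresponding to `(θ, p) ∈ Γ`. -/
def lineOf (γ : LineSpace) : Set (ℝ × ℝ) :=
  {z : ℝ × ℝ | z.1 * γ.1.sin - z.2 * γ.1.cos = γ.2}

/-- `Γ_A`: the set of (parameters of) lines meeting a given subset `A` of the plane. -/
def linesMeeting (A : Set (ℝ × ℝ)) : Set LineSpace :=
  {γ : LineSpace | (lineOf γ ∩ A).Nonempty}

/-- A Borel measure `μ` on the space of lines is *admissible* if it is invariant under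
the involution `(θ, p) ↦ (θ + π, −p)` reversing orientations, is finite on compact sets,
and gives measure zero to the set of lines through any given point of the plane. -/
def Admissible (μ : Measure LineSpace) : Prop :=
  μ.map (fun γ : LineSpace => (γ.1 + ((π : ℝ) : Real.Angle), -γ.2)) = μ ∧
    (∀ K : Set LineSpace, IsCompact K → μ K < ⊤) ∧
    (∀ z : ℝ × ℝ, μ (linesMeeting {z}) = 0)

/-- The pseudo-distance `d_μ(x, y) = (1/4)·μ(Γ_{[x,y]})` induced by a measure `μ` on the
space of lines. -/
def lineDist (μ : Measure LineSpace) (x y : ℝ × ℝ) : ℝ :=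
  (μ (linesMeeting (segment ℝ x y))).toReal / 4

/-- The area `area_μ(A) = (1/(8π))·(μ ⊗ μ)({pairs of distinct lines meeting inside A})`
induced by a measure `μ` on the space of lines (the Santaló+Blaschke area). -/
def lineArea (μ : Measure LineSpace) (A : Set (ℝ × ℝ)) : ℝ :=
  ((μ.prod μ) {γ : LineSpace × LineSpace |
      lineOf γ.1 ≠ lineOf γ.2 ∧ (lineOf γ.1 ∩ lineOf γ.2 ∩ A).Nonempty}).toReal / (8 * π)

/-- Weak convergence of a sequence of measures: convergence of the integrals of all
bounded continuous functions. -/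
def WeakTendsto (μs : ℕ → Measure LineSpace) (μ : Measure LineSpace) : Prop :=
  ∀ f : BoundedContinuousFunction LineSpace ℝ,
    Filter.Tendsto (fun n => ∫ γ, f γ ∂(μs n)) Filter.atTop (nhds (∫ γ, f γ ∂μ))

/-!
A line `γ` meets the segment `[x, y]` iff the signed distances `lineVal γ x`, `lineVal γ y` of
its endpoints to `γ` do not have the same strict sign. Hence `Γ_{[x,y]}` is closed with frontier
inside the null set `Γ_{x} ∪ Γ_{y}`, and the portmanteau theorem gives `d_{μₙ}(x, y) → d_μ(x, y)`
for each pair of points. Since `Γ_{[x,y]} ⊆ Γ_{[x',y']} ∪ Γ_{[x,x']} ∪ Γ_{[y,y']}`, every `d_ν`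
satisfies `|d_ν(x, y) - d_ν(x', y')| ≤ d_ν(x, x') + d_ν(y, y')`, and the lines meeting `[x, c]`
for `x` close to `c` stay in a thin closed strip of lines near `c`, whose measure is small for `μ`
and eventually for all `μₙ`. A finite net of `K` turns pointwise into uniform convergence.
-/

instance : BorelSpace Real.Angle :=
  inferInstanceAs (BorelSpace (AddCircle (2 * π)))


open Filter Set Metric Topology

theorem Real.Angle.abs_sin_le_one (θ : Real.Angle) : |θ.sin| ≤ 1 := by
  induction θ using Real.Angle.induction_on
  simpa using Real.abs_sin_le_one _

theorem Real.Angle.abs_cos_le_one (θ : Real.Angle) : |θ.cos| ≤ 1 := by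
  induction θ using Real.Angle.induction_on
  simpa using Real.abs_cos_le_one _

theorem zero_mem_uIcc_iff_mul_nonpos {α : Type*} [Ring α] [LinearOrder α] [IsStrictOrderedRing α]
    {a b : α} : (0 : α) ∈ uIcc a b ↔ a * b ≤ 0 := by
  rw [mem_uIcc, mul_nonpos_iff]
  tauto

/-- `lineVal γ z` is the signed distance from `z` to the line `γ`, since `(sin θ, -cos θ)` is a
unit normal of `ℓ(θ, p)`. -/
def lineVal (γ : LineSpace) : ℝ × ℝ →ᵃ[ℝ] ℝ :=
  (γ.1.sin • LinearMap.fst ℝ ℝ ℝ - γ.1.cos • LinearMap.snd ℝ ℝ ℝ).toAffineMap -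
    AffineMap.const ℝ (ℝ × ℝ) γ.2

@[simp]
theorem lineVal_apply (γ : LineSpace) (z : ℝ × ℝ) :
    lineVal γ z = z.1 * γ.1.sin - z.2 * γ.1.cos - γ.2 := by
  simp [lineVal, mul_comm]

theorem continuous_lineVal (z : ℝ × ℝ) : Continuous fun γ : LineSpace => lineVal γ z := by
  have := Real.Angle.continuous_sin
  have := Real.Angle.continuous_cos
  simp only [lineVal_apply]
  fun_prop

theorem abs_lineVal_sub_le (γ : LineSpace) (x y : ℝ × ℝ) :
    |lineVal γ x - lineVal γ y| ≤ 2 * dist x y := by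
  have h₁ : |x.1 - y.1| ≤ dist x y := (Real.dist_eq _ _).symm.trans_le (le_max_left _ _)
  have h₂ : |x.2 - y.2| ≤ dist x y := (Real.dist_eq _ _).symm.trans_le (le_max_right _ _)
  have hsin : |γ.1.sin| ≤ 1 := γ.1.abs_sin_le_one
  have hcos : |γ.1.cos| ≤ 1 := γ.1.abs_cos_le_one
  calc |lineVal γ x - lineVal γ y| = |(x.1 - y.1) * γ.1.sin - (x.2 - y.2) * γ.1.cos| := by
        simp only [lineVal_apply]; congr 1; ring
    _ ≤ |x.1 - y.1| * |γ.1.sin| + |x.2 - y.2| * |γ.1.cos| := by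
        rw [← abs_mul, ← abs_mul]; exact abs_sub _ _
    _ ≤ dist x y * 1 + dist x y * 1 := by gcongr
    _ = 2 * dist x y := by ring

theorem linesMeeting_singleton (z : ℝ × ℝ) :
    linesMeeting {z} = {γ : LineSpace | lineVal γ z = 0} := by
  ext γ
  simp [linesMeeting, lineOf, sub_eq_zero]

theorem mem_linesMeeting_segment_iff {γ : LineSpace} {x y : ℝ × ℝ} :
    γ ∈ linesMeeting (segment ℝ x y) ↔ (0 : ℝ) ∈ uIcc (lineVal γ x) (lineVal γ y) := by
  rw [← segment_eq_uIcc, ← image_segment]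
  simp [linesMeeting, lineOf, Set.Nonempty, sub_eq_zero, and_comm]

theorem linesMeeting_segment_eq (x y : ℝ × ℝ) :
    linesMeeting (segment ℝ x y) = {γ : LineSpace | lineVal γ x * lineVal γ y ≤ 0} := by
  ext γ
  rw [mem_linesMeeting_segment_iff, zero_mem_uIcc_iff_mul_nonpos, mem_ofPred_eq]

theorem frontier_linesMeeting_segment_subset (x y : ℝ × ℝ) :
    frontier (linesMeeting (segment ℝ x y)) ⊆ linesMeeting {x} ∪ linesMeeting {y} := by
  rw [linesMeeting_segment_eq, linesMeeting_singleton, linesMeeting_singleton]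
  exact (frontier_le_subset_eq ((continuous_lineVal x).mul (continuous_lineVal y))
    continuous_const).trans fun γ hγ => mul_eq_zero.mp hγ

theorem linesMeeting_segment_subset_union (x y x' y' : ℝ × ℝ) :
    linesMeeting (segment ℝ x y) ⊆ linesMeeting (segment ℝ x' y') ∪
      linesMeeting (segment ℝ x x') ∪ linesMeeting (segment ℝ y y') := by
  intro γ hγ
  simp only [mem_union, mem_linesMeeting_segment_iff] at hγ ⊢
  rcases uIcc_subset_uIcc_union_uIcc hγ with h | h
  · exact Or.inl (Or.inr h)
  rcases uIcc_subset_uIcc_union_uIcc h with h | h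
  · exact Or.inl (Or.inl h)
  · exact Or.inr (uIcc_comm (lineVal γ y') _ ▸ h)

def linesWithin (c : ℝ × ℝ) (r : ℝ) : Set LineSpace := {γ | |lineVal γ c| ≤ r}

theorem isClosed_linesWithin (c : ℝ × ℝ) (r : ℝ) : IsClosed (linesWithin c r) :=
  isClosed_le (continuous_lineVal c).abs continuous_const

theorem biInter_linesWithin (c : ℝ × ℝ) : ⋂ r > 0, linesWithin c r = linesMeeting {c} := by
  ext γ
  simp only [mem_iInter, linesWithin, mem_ofPred_eq, linesMeeting_singleton]
  exact ⟨fun h => abs_nonpos_iff.mp (le_of_forall_pos_le_add fun r hr => by simpa using h r hr),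
    fun h r hr => by rw [h, abs_zero]; exact hr.le⟩

theorem tendsto_measure_linesWithin (ν : Measure LineSpace) [IsFiniteMeasure ν] (c : ℝ × ℝ) :
    Tendsto (fun r => ν (linesWithin c r)) (𝓝[>] 0) (𝓝 (ν (linesMeeting {c}))) := by
  rw [← biInter_linesWithin]
  exact tendsto_measure_biInter_gt (fun r _ => (isClosed_linesWithin c r).nullMeasurableSet)
    (fun _ _ _ hrs _ hγ => le_trans hγ hrs) ⟨1, one_pos, measure_ne_top ν _⟩

theorem linesMeeting_segment_subset_linesWithin {x c : ℝ × ℝ} {r : ℝ} (h : 2 * dist x c ≤ r) :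
    linesMeeting (segment ℝ x c) ⊆ linesWithin c r := fun γ hγ =>
  calc |lineVal γ c| = |lineVal γ c - 0| := by rw [sub_zero]
    _ ≤ |lineVal γ c - lineVal γ x| :=
        abs_sub_right_of_mem_uIcc (mem_linesMeeting_segment_iff.mp hγ)
    _ ≤ 2 * dist c x := abs_lineVal_sub_le γ c x
    _ ≤ r := by rwa [dist_comm]

theorem lineDist_comm (ν : Measure LineSpace) (x y : ℝ × ℝ) :
    lineDist ν x y = lineDist ν y x := by
  rw [lineDist, lineDist, segment_symm]

theorem lineDist_le_of_subset {ν : Measure LineSpace} {x y : ℝ × ℝ} {S : Set LineSpace}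
    (hS : linesMeeting (segment ℝ x y) ⊆ S) {ε : ℝ} (hε : 0 ≤ ε)
    (hνS : ν S ≤ ENNReal.ofReal (4 * ε)) : lineDist ν x y ≤ ε := by
  have := ENNReal.toReal_le_of_le_ofReal (by positivity) ((measure_mono hS).trans hνS)
  rw [lineDist]
  linarith

theorem lineDist_le_add (ν : Measure LineSpace) [IsFiniteMeasure ν] (x y x' y' : ℝ × ℝ) :
    lineDist ν x y ≤ lineDist ν x' y' + lineDist ν x x' + lineDist ν y y' := by
  have := (measureReal_mono (μ := ν) (linesMeeting_segment_subset_union x y x' y')).trans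
    ((measureReal_union_le _ _).trans (add_le_add_left (measureReal_union_le _ _) _))
  simp only [lineDist, ← measureReal_def]
  linarith

theorem abs_lineDist_sub_le (ν : Measure LineSpace) [IsFiniteMeasure ν] (x y x' y' : ℝ × ℝ) :
    |lineDist ν x y - lineDist ν x' y'| ≤ lineDist ν x x' + lineDist ν y y' := by
  have h := lineDist_le_add ν x' y' x y
  rw [lineDist_comm ν x' x, lineDist_comm ν y' y] at h
  rw [abs_sub_le_iff]
  constructor <;> linarith [lineDist_le_add ν x y x' y']

section Convergence

variable {ι : Type*} {L : Filter ι} {P : ProbabilityMeasure LineSpace}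
  {Ps : ι → ProbabilityMeasure LineSpace}

theorem tendsto_lineDist (h : Tendsto Ps L (𝓝 P)) {x y : ℝ × ℝ}
    (hx : (P : Measure LineSpace) (linesMeeting {x}) = 0)
    (hy : (P : Measure LineSpace) (linesMeeting {y}) = 0) :
    Tendsto (fun i => lineDist (Ps i) x y) L (𝓝 (lineDist P x y)) := by
  have hfrontier : (P : Measure LineSpace) (frontier (linesMeeting (segment ℝ x y))) = 0 :=
    measure_mono_null (frontier_linesMeeting_segment_subset x y) (measure_union_null hx hy)
  exact ((ENNReal.tendsto_toReal (measure_ne_top _ _)).comp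
    (ProbabilityMeasure.tendsto_measure_of_null_frontier_of_tendsto' h hfrontier)).div_const 4

/-- Both distances are controlled by the measure of the closed set `linesWithin c r`: small for `P`
since `P` does not charge the lines through `c`, and eventually small for `Ps i` by the
portmanteau theorem. -/
theorem exists_eventually_lineDist_le (h : Tendsto Ps L (𝓝 P)) {c : ℝ × ℝ}
    (hc : (P : Measure LineSpace) (linesMeeting {c}) = 0) {ε : ℝ} (hε : 0 < ε) :
    ∃ δ > 0, ∀ᶠ i in L, ∀ x ∈ ball c δ, lineDist (Ps i) x c ≤ ε ∧ lineDist P x c ≤ ε := by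
  obtain ⟨r, hPr, hr⟩ : ∃ r, (P : Measure LineSpace) (linesWithin c r) < ENNReal.ofReal (4 * ε)
      ∧ 0 < r := by
    have := tendsto_measure_linesWithin (P : Measure LineSpace) c
    rw [hc] at this
    exact ((this.eventually (eventually_lt_nhds (by positivity))).and
      self_mem_nhdsWithin).exists
  have hPs : ∀ᶠ i in L, (Ps i : Measure LineSpace) (linesWithin c r) < ENNReal.ofReal (4 * ε) :=
    eventually_lt_of_limsup_lt <|
      (ProbabilityMeasure.limsup_measure_closed_le_of_tendsto h (isClosed_linesWithin c r)).trans_lt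
        hPr
  refine ⟨r / 2, by positivity, hPs.mono fun i hi x hx => ?_⟩
  have hsub := linesMeeting_segment_subset_linesWithin (x := x) (c := c) (r := r)
    (by linarith [mem_ball.mp hx])
  exact ⟨lineDist_le_of_subset hsub hε.le hi.le, lineDist_le_of_subset hsub hε.le hPr.le⟩

theorem tendstoUniformlyOn_lineDist (h : Tendsto Ps L (𝓝 P))
    (hP : ∀ z, (P : Measure LineSpace) (linesMeeting {z}) = 0) {K : Set (ℝ × ℝ)}
    (hK : IsCompact K) :
    TendstoUniformlyOn (fun i p => lineDist (Ps i) p.1 p.2) (fun p => lineDist P p.1 p.2) L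
      (K ×ˢ K) := by
  refine Metric.tendstoUniformlyOn_iff.mpr fun ε hε => ?_
  choose δ hδ hnear using fun c => exists_eventually_lineDist_le h (hP c) (ε := ε / 8)
    (by positivity)
  obtain ⟨t, -, hcover⟩ := hK.elim_nhds_subcover (fun c => ball c (δ c))
    fun c _ => ball_mem_nhds c (hδ c)
  have hnet : ∀ᶠ i in L, ∀ c ∈ t, ∀ c' ∈ t, |lineDist (Ps i) c c' - lineDist P c c'| < ε / 2 :=
    (eventually_all_finset t).2 fun c _ => (eventually_all_finset t).2 fun c' _ => by
      simpa [Real.dist_eq] using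
        (Metric.tendsto_nhds.mp (tendsto_lineDist h (hP c) (hP c'))) (ε / 2) (by positivity)
  filter_upwards [(eventually_all_finset t).2 fun c _ => hnear c, hnet]
    with i hnear hnet ⟨x, y⟩ ⟨hx, hy⟩
  obtain ⟨c, hc, hxc⟩ := mem_iUnion₂.mp (hcover hx)
  obtain ⟨c', hc', hyc'⟩ := mem_iUnion₂.mp (hcover hy)
  obtain ⟨hxPs, hxP⟩ := hnear c hc x hxc
  obtain ⟨hyPs, hyP⟩ := hnear c' hc' y hyc'
  have hPsxy := abs_le.mp (abs_lineDist_sub_le (Ps i : Measure LineSpace) x y c c')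
  have hPxy := abs_le.mp (abs_lineDist_sub_le (P : Measure LineSpace) x y c c')
  have hcc' := abs_lt.mp (hnet c hc c' hc')
  rw [Real.dist_eq, abs_lt]
  constructor <;> linarith

end Convergence

theorem lineDist_tendstoUniformly_general
    (μ : Measure LineSpace) (μs : ℕ → Measure LineSpace)
    [IsProbabilityMeasure μ] [∀ n, IsProbabilityMeasure (μs n)]
    (hμ : Admissible μ)
    (hconv : WeakTendsto μs μ)
    (K : Set (ℝ × ℝ)) (hK : IsCompact K) :
    ∀ ε : ℝ, 0 < ε → ∃ N : ℕ, ∀ n ≥ N, ∀ x ∈ K, ∀ y ∈ K,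
      |lineDist (μs n) x y - lineDist μ x y| ≤ ε := by
  have hlim : Tendsto (fun n => (⟨μs n, inferInstance⟩ : ProbabilityMeasure LineSpace)) atTop
      (@nhds (ProbabilityMeasure LineSpace) _ ⟨μ, inferInstance⟩) :=
    ProbabilityMeasure.tendsto_iff_forall_integral_tendsto.mpr hconv
  intro ε hε
  obtain ⟨N, hN⟩ := eventually_atTop.mp (Metric.tendstoUniformlyOn_iff.mp
    (tendstoUniformlyOn_lineDist hlim hμ.2.2 hK) ε hε)
  refine ⟨N, fun n hn x hx y hy => ?_⟩
  simpa [Real.dist_eq, abs_sub_comm] using (hN n hn (x, y) ⟨hx, hy⟩).le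

/-- **Lemma 11.3 of the paper**: if admissible Borel probability measures `μ n` on the
space of lines of the plane converge weakly to an admissible Borel probability measure
`μ`, then the induced pseudo-distances `d_{μ n}` converge to `d_μ` uniformly on `K × K`,
for every compact set `K ⊆ ℝ²`. -/
theorem lineDist_tendstoUniformly
    (μ : Measure LineSpace) (μs : ℕ → Measure LineSpace)
    [IsProbabilityMeasure μ] [∀ n, IsProbabilityMeasure (μs n)]
    (hμ : Admissible μ) (hμs : ∀ n, Admissible (μs n))
    (hconv : WeakTendsto μs μ)
    (K : Set (ℝ × ℝ)) (hK : IsCompact K) :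
    ∀ ε : ℝ, 0 < ε → ∃ N : ℕ, ∀ n ≥ N, ∀ x ∈ K, ∀ y ∈ K,
      |lineDist (μs n) x y - lineDist μ x y| ≤ ε :=
  lineDist_tendstoUniformly_general μ μs hμ hconv K hK
end
end

section
/- Let F be a Finsler metric on ℝⁿ and let M = {x ∈ ℝⁿ : xₙ ≥ 0} be a closed half-space, with induced distance d_F defined as the infimum of F-lengths of piecewise C¹ curves in M. Let α : I → M be a distance realizing curve, t₀ ∈ I and x₀ = α(t₀). Then: (1) if t₀ > inf I, the curve α has at least one arrival velocity at t₀, and if t₀ < sup I, it has at least one departure velocity at t₀; (2) every arrival or departure velocity v of α at t₀ satisfies F(x₀, v) = 1; (3) if t₀ is an interior point of I and α is differentiable on one side at t₀ (on the left or on the right), then α is differentiable at t₀. -/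
noncomputable section

open Set

/-- A **Finsler metric** on `ℝⁿ`: a continuous function `F : ℝⁿ × ℝⁿ → [0, ∞)` which is
positively homogeneous, subadditive and positive definite in the second variable, smooth
away from the zero section, and strongly convex. -/
structure IsFinslerMetric {n : ℕ} (F : EuclideanSpace ℝ (Fin n) → EuclideanSpace ℝ (Fin n) → ℝ) :
    Prop where
  nonneg : ∀ x v, 0 ≤ F x v
  continuous : Continuous fun p : EuclideanSpace ℝ (Fin n) × EuclideanSpace ℝ (Fin n) =>
    F p.1 p.2
  homogeneity : ∀ x v, ∀ t : ℝ, 0 ≤ t → F x (t • v) = t * F x v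
  subadditivity : ∀ x v w, F x (v + w) ≤ F x v + F x w
  pos_def : ∀ x v, v ≠ 0 → 0 < F x v
  smooth : ContDiffOn ℝ (⊤ : ℕ∞)
    (fun p : EuclideanSpace ℝ (Fin n) × EuclideanSpace ℝ (Fin n) => F p.1 p.2)
    {p | p.2 ≠ 0}
  strong_convexity : ∀ x v w, LinearIndependent ℝ ![v, w] →
    0 < iteratedDeriv 2 (fun s : ℝ => F x (v + s • w)) 0

variable {n : ℕ}

/-- A curve `γ : [a, b] → ℝⁿ` is piecewise `C¹` if `[a, b]` is subdivided by finitely many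
points into subintervals on each of which `γ` is `C¹` (up to the endpoints). -/
def IsPiecewiseC1On (γ : ℝ → EuclideanSpace ℝ (Fin n)) (a b : ℝ) : Prop :=
  ∃ (m : ℕ) (t : ℕ → ℝ), t 0 = a ∧ t m = b ∧ (∀ i < m, t i ≤ t (i + 1)) ∧
    ∀ i < m, ContDiffOn ℝ 1 γ (Icc (t i) (t (i + 1)))

/-- The `F`-length `∫ₐᵇ F(γ(t), γ′(t)) dt` of a curve `γ` on `[a, b]`. -/
def finslerLength (F : EuclideanSpace ℝ (Fin n) → EuclideanSpace ℝ (Fin n) → ℝ)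
    (γ : ℝ → EuclideanSpace ℝ (Fin n)) (a b : ℝ) : ℝ :=
  ∫ t in a..b, F (γ t) (deriv γ t)

/-- The distance `d_F(x, y)` in a closed subset `M ⊆ ℝⁿ`: the infimum of the `F`-lengths
of piecewise `C¹` curves in `M` joining `x` to `y`. -/
def finslerDist (F : EuclideanSpace ℝ (Fin n) → EuclideanSpace ℝ (Fin n) → ℝ)
    (M : Set (EuclideanSpace ℝ (Fin n))) (x y : EuclideanSpace ℝ (Fin n)) : ℝ :=
  sInf {L : ℝ | ∃ (γ : ℝ → EuclideanSpace ℝ (Fin n)) (a b : ℝ), a ≤ b ∧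
    IsPiecewiseC1On γ a b ∧ (∀ t ∈ Icc a b, γ t ∈ M) ∧ γ a = x ∧ γ b = y ∧
    L = finslerLength F γ a b}

/-- A curve `α`, defined on an interval `I ⊆ ℝ` and with values in `M`, is *distance
realizing* if `d_F(α(t), α(t′)) = t′ − t` for all `t ≤ t′` in `I`. -/
def IsDistanceRealizing (F : EuclideanSpace ℝ (Fin n) → EuclideanSpace ℝ (Fin n) → ℝ)
    (M : Set (EuclideanSpace ℝ (Fin n))) (I : Set ℝ) (α : ℝ → EuclideanSpace ℝ (Fin n)) :
    Prop :=
  (∀ t ∈ I, α t ∈ M) ∧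
    ∀ t ∈ I, ∀ t' ∈ I, t ≤ t' → finslerDist F M (α t) (α t') = t' - t

/-- `v` is an *arrival velocity* of the curve `α : I → ℝⁿ` at `t₀`: `v` is an
accumulation point of the difference quotients `(α(t) − α(t₀))/(t − t₀)` as `t < t₀`
tends to `t₀` in `I`. -/
def IsArrivalVelocity (α : ℝ → EuclideanSpace ℝ (Fin n)) (I : Set ℝ) (t₀ : ℝ)
    (v : EuclideanSpace ℝ (Fin n)) : Prop :=
  ∃ u : ℕ → ℝ, (∀ j, u j ∈ I ∧ u j < t₀) ∧
    Filter.Tendsto u Filter.atTop (nhds t₀) ∧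
    Filter.Tendsto (fun j => (u j - t₀)⁻¹ • (α (u j) - α t₀)) Filter.atTop (nhds v)

/-- `v` is a *departure velocity* of the curve `α : I → ℝⁿ` at `t₀`: `v` is an
accumulation point of the difference quotients `(α(t) − α(t₀))/(t − t₀)` as `t > t₀`
tends to `t₀` in `I`. -/
def IsDepartureVelocity (α : ℝ → EuclideanSpace ℝ (Fin n)) (I : Set ℝ) (t₀ : ℝ)
    (v : EuclideanSpace ℝ (Fin n)) : Prop :=
  ∃ u : ℕ → ℝ, (∀ j, u j ∈ I ∧ t₀ < u j) ∧
    Filter.Tendsto u Filter.atTop (nhds t₀) ∧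
    Filter.Tendsto (fun j => (u j - t₀)⁻¹ • (α (u j) - α t₀)) Filter.atTop (nhds v)

open Set MeasureTheory intervalIntegral

local notation "E" => EuclideanSpace ℝ (Fin n)

-- monotonicity of partitions
lemma part_mono {t : ℕ → ℝ} {m : ℕ} (ht : ∀ i < m, t i ≤ t (i + 1)) :
    ∀ i j, i ≤ j → j ≤ m → t i ≤ t j := by
  intro i j hij hjm
  induction j with
  | zero => simp_all
  | succ k ih =>
    rcases Nat.eq_or_lt_of_le hij with h | h
    · simp [h]
    · exact le_trans (ih (Nat.lt_succ_iff.mp h) (le_trans (Nat.le_succ k) hjm))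
        (ht k (Nat.lt_of_succ_le hjm))

-- the derivative data on one C¹ piece
lemma piece_data {γ : ℝ → E} {p q : ℝ} (hγ : ContDiffOn ℝ 1 γ (Icc p q)) (hpq : p < q) :
    ∃ g : ℝ → E, ContinuousOn g (Icc p q) ∧
      ∀ τ ∈ Ioo p q, HasDerivAt γ (g τ) τ ∧ deriv γ τ = g τ := by
  refine ⟨derivWithin γ (Icc p q), hγ.continuousOn_derivWithin (uniqueDiffOn_Icc hpq) le_rfl, ?_⟩
  intro τ hτ
  have hmem : Icc p q ∈ nhds τ := Icc_mem_nhds hτ.1 hτ.2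
  have hd : DifferentiableAt ℝ γ τ :=
    ((hγ.differentiableOn one_ne_zero) τ (Ioo_subset_Icc_self hτ)).differentiableAt hmem
  rw [derivWithin_of_mem_nhds hmem]
  exact ⟨hd.hasDerivAt, rfl⟩

lemma piece_intervalIntegrable {γ : ℝ → E} {p q : ℝ} (hγ : ContDiffOn ℝ 1 γ (Icc p q))
    (hpq : p ≤ q) {X : Type*} [NormedAddCommGroup X] {Φ : EuclideanSpace ℝ (Fin n) × EuclideanSpace ℝ (Fin n) → X}
    (hΦ : Continuous Φ) :
    IntervalIntegrable (fun τ => Φ (γ τ, deriv γ τ)) volume p q := by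
  rcases eq_or_lt_of_le hpq with h | h
  · subst h; exact IntervalIntegrable.refl
  obtain ⟨g, hg, hgd⟩ := piece_data hγ h
  have hcont : ContinuousOn (fun τ => Φ (γ τ, g τ)) (Icc p q) :=
    hΦ.comp_continuousOn ((hγ.continuousOn).prodMk hg)
  have hcont' : ContinuousOn (fun τ => Φ (γ τ, g τ)) (uIcc p q) := by rwa [uIcc_of_le hpq]
  have h1 : IntervalIntegrable (fun τ => Φ (γ τ, g τ)) volume p q :=
    hcont'.intervalIntegrable
  rw [intervalIntegrable_iff_integrableOn_Ioc_of_le hpq] at h1 ⊢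
  rw [integrableOn_Ioc_iff_integrableOn_Ioo] at h1 ⊢
  exact h1.congr_fun (fun τ hτ => by rw [(hgd τ hτ).2]) measurableSet_Ioo

lemma pw_intervalIntegrable {γ : ℝ → E} {a b : ℝ} (h : IsPiecewiseC1On γ a b)
    {X : Type*} [NormedAddCommGroup X]
    {Φ : EuclideanSpace ℝ (Fin n) × EuclideanSpace ℝ (Fin n) → X} (hΦ : Continuous Φ) :
    IntervalIntegrable (fun τ => Φ (γ τ, deriv γ τ)) volume a b := by
  obtain ⟨m, t, h0, hm, hmono, hC1⟩ := h
  have key : ∀ k ≤ m, IntervalIntegrable (fun τ => Φ (γ τ, deriv γ τ)) volume (t 0) (t k) := by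
    intro k hk
    induction k with
    | zero => exact IntervalIntegrable.refl
    | succ j ih =>
      exact (ih (le_trans (Nat.le_succ j) hk)).trans
        (piece_intervalIntegrable (hC1 j (Nat.lt_of_succ_le hk))
          (hmono j (Nat.lt_of_succ_le hk)) hΦ)
  rw [← h0, ← hm]; exact key m le_rfl

lemma piece_ftc {γ : ℝ → E} {p q : ℝ} (hγ : ContDiffOn ℝ 1 γ (Icc p q)) (hpq : p ≤ q) :
    ∫ τ in p..q, deriv γ τ = γ q - γ p := by
  rcases eq_or_lt_of_le hpq with h | h
  · subst h; simp
  obtain ⟨g, hg, hgd⟩ := piece_data hγ h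
  refine integral_eq_sub_of_hasDeriv_right_of_le hpq hγ.continuousOn
    (fun τ hτ => ((hgd τ hτ).1.hasDerivWithinAt).congr_deriv (hgd τ hτ).2.symm) ?_
  exact piece_intervalIntegrable hγ hpq (Φ := Prod.snd) continuous_snd

lemma pw_ftc {γ : ℝ → E} {a b : ℝ} (h : IsPiecewiseC1On γ a b) :
    ∫ τ in a..b, deriv γ τ = γ b - γ a := by
  obtain ⟨m, t, h0, hm, hmono, hC1⟩ := h
  have key : ∀ k ≤ m, ∫ τ in (t 0)..(t k), deriv γ τ = γ (t k) - γ (t 0) := by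
    intro k hk
    induction k with
    | zero => simp
    | succ j ih =>
      have hjm := Nat.lt_of_succ_le hk
      have i1 : IntervalIntegrable (fun τ => deriv γ τ) volume (t 0) (t j) :=
        pw_intervalIntegrable ⟨j, t, rfl, rfl, fun i hi => hmono i (lt_of_lt_of_le hi (le_of_lt hjm)),
          fun i hi => hC1 i (lt_of_lt_of_le hi (le_of_lt hjm))⟩ (Φ := Prod.snd) continuous_snd
      have i2 : IntervalIntegrable (fun τ => deriv γ τ) volume (t j) (t (j+1)) :=
        piece_intervalIntegrable (hC1 j hjm) (hmono j hjm) (Φ := Prod.snd) continuous_snd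
      rw [← integral_add_adjacent_intervals i1 i2, ih (le_trans (Nat.le_succ j) hk),
        piece_ftc (hC1 j hjm) (hmono j hjm)]
      abel
  rw [← h0, ← hm]; exact key m le_rfl

-- continuity on union of two closed sets
lemma continuousOn_union_closed {X Y : Type*} [TopologicalSpace X] [TopologicalSpace Y]
    {f : X → Y} {s t : Set X} (hs : IsClosed s) (ht : IsClosed t)
    (hfs : ContinuousOn f s) (hft : ContinuousOn f t) : ContinuousOn f (s ∪ t) := by
  intro x hx
  have hcs : ContinuousWithinAt f s x := by
    by_cases h : x ∈ s
    · exact hfs x h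
    · exact continuousWithinAt_of_notMem_closure (by rwa [hs.closure_eq])
  have hct : ContinuousWithinAt f t x := by
    by_cases h : x ∈ t
    · exact hft x h
    · exact continuousWithinAt_of_notMem_closure (by rwa [ht.closure_eq])
  exact hcs.union hct

lemma pw_continuousOn {γ : ℝ → E} {a b : ℝ} (h : IsPiecewiseC1On γ a b) :
    ContinuousOn γ (Icc a b) := by
  obtain ⟨m, t, h0, hm, hmono, hC1⟩ := h
  have key : ∀ k ≤ m, ContinuousOn γ (Icc (t 0) (t k)) := by
    intro k hk
    induction k with
    | zero => rw [Icc_self]; exact continuousOn_singleton _ _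
    | succ j ih =>
      have hjm := Nat.lt_of_succ_le hk
      have := continuousOn_union_closed isClosed_Icc isClosed_Icc
        (ih (le_trans (Nat.le_succ j) hk)) (hC1 j hjm).continuousOn
      rwa [Icc_union_Icc_eq_Icc (part_mono hmono 0 j (Nat.zero_le j) (le_of_lt hjm))
        (hmono j hjm)] at this
  rw [← h0, ← hm]; exact key m le_rfl

lemma pw_trunc_right {γ : ℝ → E} {a b s : ℝ} (h : IsPiecewiseC1On γ a b) (hs : s ∈ Icc a b) :
    IsPiecewiseC1On γ a s := by
  obtain ⟨m, t, h0, hm, hmono, hC1⟩ := h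
  refine ⟨m, fun i => min (t i) s, by simp [h0, hs.1], by simp [hm, hs.2], ?_, ?_⟩
  · intro i hi; exact min_le_min (hmono i hi) le_rfl
  · intro i hi
    dsimp only
    rcases le_or_gt s (t i) with hle | hlt
    · have h1 : min (t i) s = s := min_eq_right hle
      have h2 : min (t (i+1)) s = s := min_eq_right (le_trans hle (hmono i hi))
      rw [h1, h2, Icc_self]
      intro x hx; rw [mem_singleton_iff] at hx; subst hx; exact contDiffWithinAt_singleton
    · have h1 : min (t i) s = t i := min_eq_left (le_of_lt hlt)
      rw [h1]
      exact (hC1 i hi).mono (Icc_subset_Icc le_rfl (min_le_left _ _))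

lemma pw_trunc_left {γ : ℝ → E} {a b s : ℝ} (h : IsPiecewiseC1On γ a b) (hs : s ∈ Icc a b) :
    IsPiecewiseC1On γ s b := by
  obtain ⟨m, t, h0, hm, hmono, hC1⟩ := h
  refine ⟨m, fun i => max (t i) s, by simp [h0, hs.1], by simp [hm, hs.2], ?_, ?_⟩
  · intro i hi; exact max_le_max (hmono i hi) le_rfl
  · intro i hi
    dsimp only
    rcases le_or_gt (t (i+1)) s with hle | hlt
    · have h2 : max (t (i+1)) s = s := max_eq_right hle
      have h1 : max (t i) s = s := max_eq_right (le_trans (hmono i hi) hle)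
      rw [h1, h2, Icc_self]
      intro x hx; rw [mem_singleton_iff] at hx; subst hx; exact contDiffWithinAt_singleton
    · have h2 : max (t (i+1)) s = t (i+1) := max_eq_left (le_of_lt hlt)
      rw [h2]
      exact (hC1 i hi).mono (Icc_subset_Icc (le_max_left _ _) le_rfl)

lemma pw_chord {γ : ℝ → E} {a b : ℝ} (h : IsPiecewiseC1On γ a b) (hab : a ≤ b) :
    ‖γ b - γ a‖ ≤ ∫ τ in a..b, ‖deriv γ τ‖ := by
  rw [← pw_ftc h]
  exact intervalIntegral.norm_integral_le_integral_norm hab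

lemma pw_linear {γ : ℝ → E} {a b : ℝ} (h : IsPiecewiseC1On γ a b)
    (ℓ : EuclideanSpace ℝ (Fin n) →L[ℝ] ℝ) :
    ∫ τ in a..b, ℓ (deriv γ τ) = ℓ (γ b - γ a) := by
  rw [← pw_ftc h]
  exact ℓ.intervalIntegral_comp_comm (pw_intervalIntegrable h (Φ := Prod.snd) continuous_snd)

def lengthSet (F : EuclideanSpace ℝ (Fin n) → EuclideanSpace ℝ (Fin n) → ℝ)
    (M : Set (EuclideanSpace ℝ (Fin n))) (x y : EuclideanSpace ℝ (Fin n)) : Set ℝ :=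
  {L : ℝ | ∃ (γ : ℝ → EuclideanSpace ℝ (Fin n)) (a b : ℝ), a ≤ b ∧
    IsPiecewiseC1On γ a b ∧ (∀ t ∈ Icc a b, γ t ∈ M) ∧ γ a = x ∧ γ b = y ∧
    L = finslerLength F γ a b}

lemma finslerDist_eq (F : EuclideanSpace ℝ (Fin n) → EuclideanSpace ℝ (Fin n) → ℝ)
    (M : Set (EuclideanSpace ℝ (Fin n))) (x y : EuclideanSpace ℝ (Fin n)) :
    finslerDist F M x y = sInf (lengthSet F M x y) := rfl

lemma lengthSet_nonneg {F : EuclideanSpace ℝ (Fin n) → EuclideanSpace ℝ (Fin n) → ℝ}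
    (hF : IsFinslerMetric F) {M : Set (EuclideanSpace ℝ (Fin n))}
    {x y : EuclideanSpace ℝ (Fin n)} {L : ℝ} (hL : L ∈ lengthSet F M x y) : 0 ≤ L := by
  obtain ⟨γ, a, b, hab, hpw, hmem, hga, hgb, rfl⟩ := hL
  exact intervalIntegral.integral_nonneg hab (fun τ _ => hF.nonneg _ _)

lemma finslerDist_nonneg {F : EuclideanSpace ℝ (Fin n) → EuclideanSpace ℝ (Fin n) → ℝ}
    (hF : IsFinslerMetric F) (M : Set (EuclideanSpace ℝ (Fin n)))
    (x y : EuclideanSpace ℝ (Fin n)) : 0 ≤ finslerDist F M x y :=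
  Real.sInf_nonneg (fun _ hL => lengthSet_nonneg hF hL)

lemma lengthSet_bddBelow {F : EuclideanSpace ℝ (Fin n) → EuclideanSpace ℝ (Fin n) → ℝ}
    (hF : IsFinslerMetric F) (M : Set (EuclideanSpace ℝ (Fin n)))
    (x y : EuclideanSpace ℝ (Fin n)) : BddBelow (lengthSet F M x y) :=
  ⟨0, fun _ hL => lengthSet_nonneg hF hL⟩

section Segment

variable {F : EuclideanSpace ℝ (Fin n) → EuclideanSpace ℝ (Fin n) → ℝ}
  {M : Set (EuclideanSpace ℝ (Fin n))} {x y : EuclideanSpace ℝ (Fin n)}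

lemma segment_deriv (x y : EuclideanSpace ℝ (Fin n)) (τ : ℝ) :
    deriv (fun τ : ℝ => x + τ • (y - x)) τ = y - x := by
  have : HasDerivAt (fun τ : ℝ => x + τ • (y - x)) (y - x) τ := by
    have h1 : HasDerivAt (fun τ : ℝ => τ • (y - x)) ((1 : ℝ) • (y - x)) τ :=
      (hasDerivAt_id τ).smul_const (y - x)
    rw [one_smul] at h1
    exact h1.const_add x
  exact this.deriv

lemma segment_pw (x y : EuclideanSpace ℝ (Fin n)) :
    IsPiecewiseC1On (fun τ : ℝ => x + τ • (y - x)) 0 1 := by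
  refine ⟨1, fun i => (i : ℝ), by norm_num, by norm_num, by norm_num, ?_⟩
  intro i hi
  have : ContDiff ℝ 1 (fun τ : ℝ => x + τ • (y - x)) :=
    contDiff_const.add (contDiff_id.smul contDiff_const)
  exact this.contDiffOn

lemma segment_mem_lengthSet (hF : IsFinslerMetric F)
    (hseg : ∀ τ ∈ Icc (0:ℝ) 1, x + τ • (y - x) ∈ M) :
    (∫ τ in (0:ℝ)..1, F (x + τ • (y - x)) (y - x)) ∈ lengthSet F M x y := by
  refine ⟨fun τ : ℝ => x + τ • (y - x), 0, 1, zero_le_one, segment_pw x y, hseg,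
    by simp, by simp, ?_⟩
  unfold finslerLength
  congr 1
  ext τ
  rw [segment_deriv]

lemma lengthSet_nonempty (hF : IsFinslerMetric F)
    (hseg : ∀ τ ∈ Icc (0:ℝ) 1, x + τ • (y - x) ∈ M) : (lengthSet F M x y).Nonempty :=
  ⟨_, segment_mem_lengthSet hF hseg⟩

lemma finslerDist_le_of_bound (hF : IsFinslerMetric F)
    (hseg : ∀ τ ∈ Icc (0:ℝ) 1, x + τ • (y - x) ∈ M) {B : ℝ}
    (hB : ∀ τ ∈ Icc (0:ℝ) 1, F (x + τ • (y - x)) (y - x) ≤ B) :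
    finslerDist F M x y ≤ B := by
  have h1 : finslerDist F M x y ≤ ∫ τ in (0:ℝ)..1, F (x + τ • (y - x)) (y - x) :=
    csInf_le (lengthSet_bddBelow hF M x y) (segment_mem_lengthSet hF hseg)
  refine le_trans h1 ?_
  have hint : IntervalIntegrable (fun τ => F (x + τ • (y - x)) (y - x)) volume 0 1 := by
    apply ContinuousOn.intervalIntegrable
    exact (hF.continuous.comp ((continuous_const.add
      (continuous_id.smul continuous_const)).prodMk continuous_const)).continuousOn
  calc (∫ τ in (0:ℝ)..1, F (x + τ • (y - x)) (y - x)) ≤ ∫ τ in (0:ℝ)..1, B := by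
        apply intervalIntegral.integral_mono_on zero_le_one hint
          intervalIntegrable_const
        intro τ hτ; exact hB τ hτ
    _ = B := by simp

end Segment

section Lower

open Metric

variable {F : EuclideanSpace ℝ (Fin n) → EuclideanSpace ℝ (Fin n) → ℝ}
  {M : Set (EuclideanSpace ℝ (Fin n))}

set_option maxHeartbeats 2000000 in
/-- Master lower bound for the length of a single admissible curve. -/
lemma length_lower_bound (hF : IsFinslerMetric F) (x₀ : EuclideanSpace ℝ (Fin n))
    {c r : ℝ} (hc : 0 < c) (hr : 0 < r)
    (hcF : ∀ z ∈ closedBall x₀ r, ∀ v, c * ‖v‖ ≤ F z v)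
    (ℓ : EuclideanSpace ℝ (Fin n) →L[ℝ] ℝ)
    (hℓ : ∀ z ∈ closedBall x₀ r, ∀ v, ℓ v ≤ F z v)
    {x y : EuclideanSpace ℝ (Fin n)}
    (hxy : ‖x - x₀‖ ≤ r / 2 ∨ ‖y - x₀‖ ≤ r / 2)
    {L : ℝ} (hL : L ∈ lengthSet F M x y) :
    min (c * (r / 2)) (ℓ (y - x)) ≤ L := by
  obtain ⟨γ, a, b, hab, hpw, hmem, hga, hgb, rfl⟩ := hL
  have hρcont : ContinuousOn (fun τ => ‖γ τ - x₀‖) (Icc a b) :=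
    ((pw_continuousOn hpw).sub continuousOn_const).norm
  have hIF : IntervalIntegrable (fun τ => F (γ τ) (deriv γ τ)) volume a b :=
    pw_intervalIntegrable hpw hF.continuous
  by_cases hball : ∀ τ ∈ Icc a b, γ τ ∈ closedBall x₀ r
  · -- the curve stays in the ball: use the linear functional
    refine le_trans (min_le_right _ _) ?_
    have h1 : ∫ τ in a..b, ℓ (deriv γ τ) ≤ finslerLength F γ a b := by
      apply intervalIntegral.integral_mono_on hab
        (pw_intervalIntegrable hpw (Φ := fun p => ℓ p.2) (ℓ.continuous.comp continuous_snd))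
        hIF
      intro τ hτ
      exact hℓ _ (hball τ hτ) _
    rw [pw_linear hpw ℓ, hga, hgb] at h1
    exact h1
  · -- the curve leaves the ball: exit-time argument
    push_neg at hball
    obtain ⟨τ₀, hτ₀, hτ₀r⟩ := hball
    rw [mem_closedBall_iff_norm] at hτ₀r
    push_neg at hτ₀r
    set Ex : Set ℝ := {τ ∈ Icc a b | r ≤ ‖γ τ - x₀‖} with hEx
    have hExcl : IsClosed Ex := by
      have : Ex = Icc a b ∩ (fun τ => ‖γ τ - x₀‖) ⁻¹' (Ici r) := by
        ext τ; simp [hEx, mem_setOf_eq, and_comm]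
      rw [this]
      exact hρcont.preimage_isClosed_of_isClosed isClosed_Icc isClosed_Ici
    have hExne : Ex.Nonempty := ⟨τ₀, hτ₀, le_of_lt hτ₀r⟩
    have hExbdd : BddBelow Ex := ⟨a, fun τ hτ => hτ.1.1⟩
    have hExbdd' : BddAbove Ex := ⟨b, fun τ hτ => hτ.1.2⟩
    refine le_trans (min_le_left _ _) ?_
    rcases hxy with hnear | hnear
    · -- start point near x₀; first exit time
      set s₀ := sInf Ex with hs₀
      have hs₀mem : s₀ ∈ Ex := hExcl.csInf_mem hExne hExbdd
      have hs₀ab : s₀ ∈ Icc a b := hs₀mem.1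
      have hρs₀ : r ≤ ‖γ s₀ - x₀‖ := hs₀mem.2
      have hbefore : ∀ τ ∈ Ico a s₀, ‖γ τ - x₀‖ ≤ r := by
        intro τ hτ
        by_contra hcon
        push_neg at hcon
        exact absurd (csInf_le hExbdd ⟨⟨hτ.1, le_trans (le_of_lt hτ.2) hs₀ab.2⟩,
          le_of_lt hcon⟩) (not_le.mpr hτ.2)
      have has₀ : a < s₀ := by
        rcases eq_or_lt_of_le hs₀ab.1 with h | h
        · exfalso
          rw [← h, hga] at hρs₀
          have : r / 2 < r := by linarith
          linarith [le_trans hρs₀ hnear]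
        · exact h
      have hρs₀' : ‖γ s₀ - x₀‖ ≤ r := by
        have hne : (nhdsWithin s₀ (Ioo a s₀)).NeBot := by
          rw [← mem_closure_iff_nhdsWithin_neBot, closure_Ioo (ne_of_lt has₀)]
          exact ⟨le_of_lt has₀, le_rfl⟩
        have htd : Filter.Tendsto (fun τ => ‖γ τ - x₀‖) (nhdsWithin s₀ (Ioo a s₀))
            (nhds ‖γ s₀ - x₀‖) :=
          (hρcont s₀ hs₀ab).mono
            (fun τ hτ => ⟨le_of_lt hτ.1, le_trans (le_of_lt hτ.2) hs₀ab.2⟩)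
        refine le_of_tendsto htd ?_
        filter_upwards [self_mem_nhdsWithin] with τ hτ
        exact hbefore τ ⟨le_of_lt hτ.1, hτ.2⟩
      have hballs₀ : ∀ τ ∈ Icc a s₀, γ τ ∈ closedBall x₀ r := by
        intro τ hτ
        rw [mem_closedBall_iff_norm]
        rcases eq_or_lt_of_le hτ.2 with h | h
        · rw [h]; exact hρs₀'
        · exact hbefore τ ⟨hτ.1, h⟩
      have htr : IsPiecewiseC1On γ a s₀ := pw_trunc_right hpw hs₀ab
      -- split off the tail
      have hsplit : (∫ τ in a..s₀, F (γ τ) (deriv γ τ)) ≤ finslerLength F γ a b := by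
        have i1 : IntervalIntegrable (fun τ => F (γ τ) (deriv γ τ)) volume a s₀ :=
          hIF.mono_set (by
            rw [uIcc_of_le hs₀ab.1, uIcc_of_le hab]
            exact Icc_subset_Icc le_rfl hs₀ab.2)
        have i2 : IntervalIntegrable (fun τ => F (γ τ) (deriv γ τ)) volume s₀ b :=
          hIF.mono_set (by
            rw [uIcc_of_le hs₀ab.2, uIcc_of_le hab]
            exact Icc_subset_Icc hs₀ab.1 le_rfl)
        have := intervalIntegral.integral_add_adjacent_intervals i1 i2
        unfold finslerLength
        rw [← this]
        have : 0 ≤ ∫ τ in s₀..b, F (γ τ) (deriv γ τ) :=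
          intervalIntegral.integral_nonneg hs₀ab.2 (fun τ _ => hF.nonneg _ _)
        linarith
      refine le_trans ?_ hsplit
      have hmono2 : c * ∫ τ in a..s₀, ‖deriv γ τ‖ ≤ ∫ τ in a..s₀, F (γ τ) (deriv γ τ) := by
        rw [← intervalIntegral.integral_const_mul]
        apply intervalIntegral.integral_mono_on hs₀ab.1
          ((pw_intervalIntegrable htr (Φ := fun p => ‖p.2‖)
            (continuous_norm.comp continuous_snd)).const_mul c)
          (pw_intervalIntegrable htr hF.continuous)
        intro τ hτ
        exact hcF _ (hballs₀ τ hτ) _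
      refine le_trans ?_ hmono2
      have hchord := pw_chord htr hs₀ab.1
      have hnorm : r / 2 ≤ ‖γ s₀ - γ a‖ := by
        have := norm_sub_norm_le (γ s₀ - x₀) (γ a - x₀)
        simp only [sub_sub_sub_cancel_right] at this
        rw [hga] at this ⊢
        linarith
      calc c * (r / 2) ≤ c * ‖γ s₀ - γ a‖ := by
            apply mul_le_mul_of_nonneg_left hnorm (le_of_lt hc)
        _ ≤ c * ∫ τ in a..s₀, ‖deriv γ τ‖ :=
            mul_le_mul_of_nonneg_left hchord (le_of_lt hc)
    · -- end point near x₀; last exit time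
      set s₁ := sSup Ex with hs₁
      have hs₁mem : s₁ ∈ Ex := hExcl.csSup_mem hExne hExbdd'
      have hs₁ab : s₁ ∈ Icc a b := hs₁mem.1
      have hρs₁ : r ≤ ‖γ s₁ - x₀‖ := hs₁mem.2
      have hafter : ∀ τ ∈ Ioc s₁ b, ‖γ τ - x₀‖ ≤ r := by
        intro τ hτ
        by_contra hcon
        push_neg at hcon
        exact absurd (le_csSup hExbdd' ⟨⟨le_trans hs₁ab.1 (le_of_lt hτ.1), hτ.2⟩,
          le_of_lt hcon⟩) (not_le.mpr hτ.1)
      have hbs₁ : s₁ < b := by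
        rcases eq_or_lt_of_le hs₁ab.2 with h | h
        · exfalso
          rw [h, hgb] at hρs₁
          linarith [le_trans hρs₁ hnear]
        · exact h
      have hρs₁' : ‖γ s₁ - x₀‖ ≤ r := by
        have hne : (nhdsWithin s₁ (Ioo s₁ b)).NeBot := by
          rw [← mem_closure_iff_nhdsWithin_neBot, closure_Ioo (ne_of_lt hbs₁)]
          exact ⟨le_rfl, le_of_lt hbs₁⟩
        have htd : Filter.Tendsto (fun τ => ‖γ τ - x₀‖) (nhdsWithin s₁ (Ioo s₁ b))
            (nhds ‖γ s₁ - x₀‖) :=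
          (hρcont s₁ hs₁ab).mono
            (fun τ hτ => ⟨le_trans hs₁ab.1 (le_of_lt hτ.1), le_of_lt hτ.2⟩)
        refine le_of_tendsto htd ?_
        filter_upwards [self_mem_nhdsWithin] with τ hτ
        exact hafter τ ⟨hτ.1, le_of_lt hτ.2⟩
      have hballs₁ : ∀ τ ∈ Icc s₁ b, γ τ ∈ closedBall x₀ r := by
        intro τ hτ
        rw [mem_closedBall_iff_norm]
        rcases eq_or_lt_of_le hτ.1 with h | h
        · rw [← h]; exact hρs₁'
        · exact hafter τ ⟨h, hτ.2⟩
      have htr : IsPiecewiseC1On γ s₁ b := pw_trunc_left hpw hs₁ab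
      have hsplit : (∫ τ in s₁..b, F (γ τ) (deriv γ τ)) ≤ finslerLength F γ a b := by
        have i1 : IntervalIntegrable (fun τ => F (γ τ) (deriv γ τ)) volume a s₁ :=
          hIF.mono_set (by
            rw [uIcc_of_le hs₁ab.1, uIcc_of_le hab]
            exact Icc_subset_Icc le_rfl hs₁ab.2)
        have i2 : IntervalIntegrable (fun τ => F (γ τ) (deriv γ τ)) volume s₁ b :=
          hIF.mono_set (by
            rw [uIcc_of_le hs₁ab.2, uIcc_of_le hab]
            exact Icc_subset_Icc hs₁ab.1 le_rfl)
        have := intervalIntegral.integral_add_adjacent_intervals i1 i2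
        unfold finslerLength
        rw [← this]
        have : 0 ≤ ∫ τ in a..s₁, F (γ τ) (deriv γ τ) :=
          intervalIntegral.integral_nonneg hs₁ab.1 (fun τ _ => hF.nonneg _ _)
        linarith
      refine le_trans ?_ hsplit
      have hmono2 : c * ∫ τ in s₁..b, ‖deriv γ τ‖ ≤ ∫ τ in s₁..b, F (γ τ) (deriv γ τ) := by
        rw [← intervalIntegral.integral_const_mul]
        apply intervalIntegral.integral_mono_on hs₁ab.2
          ((pw_intervalIntegrable htr (Φ := fun p => ‖p.2‖)
            (continuous_norm.comp continuous_snd)).const_mul c)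
          (pw_intervalIntegrable htr hF.continuous)
        intro τ hτ
        exact hcF _ (hballs₁ τ hτ) _
      refine le_trans ?_ hmono2
      have hchord := pw_chord htr hs₁ab.2
      have hnorm : r / 2 ≤ ‖γ b - γ s₁‖ := by
        have h2 := norm_sub_norm_le (γ s₁ - x₀) (γ b - x₀)
        rw [sub_sub_sub_cancel_right, norm_sub_rev (γ s₁) (γ b), hgb] at h2
        rw [hgb]
        linarith
      calc c * (r / 2) ≤ c * ‖γ b - γ s₁‖ :=
            mul_le_mul_of_nonneg_left hnorm (le_of_lt hc)
        _ ≤ c * ∫ τ in s₁..b, ‖deriv γ τ‖ :=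
            mul_le_mul_of_nonneg_left hchord (le_of_lt hc)

lemma finslerDist_lower_bound (hF : IsFinslerMetric F) (x₀ : EuclideanSpace ℝ (Fin n))
    {c r : ℝ} (hc : 0 < c) (hr : 0 < r)
    (hcF : ∀ z ∈ closedBall x₀ r, ∀ v, c * ‖v‖ ≤ F z v)
    (ℓ : EuclideanSpace ℝ (Fin n) →L[ℝ] ℝ)
    (hℓ : ∀ z ∈ closedBall x₀ r, ∀ v, ℓ v ≤ F z v)
    {x y : EuclideanSpace ℝ (Fin n)}
    (hxy : ‖x - x₀‖ ≤ r / 2 ∨ ‖y - x₀‖ ≤ r / 2)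
    (hne : (lengthSet F M x y).Nonempty) :
    min (c * (r / 2)) (ℓ (y - x)) ≤ finslerDist F M x y :=
  le_csInf hne (fun L hL => length_lower_bound hF x₀ hc hr hcF ℓ hℓ hxy hL)

end Lower

section Constants

open Metric

variable {F : EuclideanSpace ℝ (Fin n) → EuclideanSpace ℝ (Fin n) → ℝ}

lemma Finsler.zero (hF : IsFinslerMetric F) (x : EuclideanSpace ℝ (Fin n)) : F x 0 = 0 := by
  have := hF.homogeneity x 0 0 le_rfl
  simpa using this

lemma Finsler.scale (hF : IsFinslerMetric F) (z v : EuclideanSpace ℝ (Fin n)) (hv : v ≠ 0) :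
    F z v = ‖v‖ * F z (‖v‖⁻¹ • v) := by
  have hn : ‖v‖ ≠ 0 := norm_ne_zero_iff.mpr hv
  rw [← hF.homogeneity z (‖v‖⁻¹ • v) ‖v‖ (norm_nonneg v), smul_inv_smul₀ hn]

lemma Finsler.exists_upper [Nontrivial (EuclideanSpace ℝ (Fin n))] (hF : IsFinslerMetric F)
    (x₀ : EuclideanSpace ℝ (Fin n)) :
    ∃ C : ℝ, 0 < C ∧ ∀ z ∈ closedBall x₀ 1, ∀ v, F z v ≤ C * ‖v‖ := by
  have hK : IsCompact (closedBall x₀ 1 ×ˢ sphere (0 : EuclideanSpace ℝ (Fin n)) 1) :=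
    (isCompact_closedBall _ _).prod (isCompact_sphere _ _)
  obtain ⟨u, hu⟩ := (NormedSpace.sphere_nonempty
    (x := (0 : EuclideanSpace ℝ (Fin n))) (r := 1)).mpr zero_le_one
  have hKne : (closedBall x₀ 1 ×ˢ sphere (0 : EuclideanSpace ℝ (Fin n)) 1).Nonempty :=
    ⟨(x₀, u), mem_closedBall_self zero_le_one, hu⟩
  obtain ⟨p, hpK, hmax⟩ := hK.exists_isMaxOn hKne hF.continuous.continuousOn
  refine ⟨max (F p.1 p.2) 1, lt_of_lt_of_le zero_lt_one (le_max_right _ _), ?_⟩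
  intro z hz v
  by_cases hv : v = 0
  · simp [hv, Finsler.zero hF z]
  · have hu1 : ‖v‖⁻¹ • v ∈ sphere (0 : EuclideanSpace ℝ (Fin n)) 1 := by
      simp [norm_smul, norm_ne_zero_iff.mpr hv, inv_mul_cancel₀]
    have := hmax (Set.mk_mem_prod hz hu1)
    rw [Finsler.scale hF z v hv, mul_comm]
    apply mul_le_mul_of_nonneg_right _ (norm_nonneg v)
    exact le_trans this (le_max_left _ _)

lemma Finsler.exists_lower [Nontrivial (EuclideanSpace ℝ (Fin n))] (hF : IsFinslerMetric F)
    (x₀ : EuclideanSpace ℝ (Fin n)) :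
    ∃ c : ℝ, 0 < c ∧ ∀ z ∈ closedBall x₀ 1, ∀ v, c * ‖v‖ ≤ F z v := by
  have hK : IsCompact (closedBall x₀ 1 ×ˢ sphere (0 : EuclideanSpace ℝ (Fin n)) 1) :=
    (isCompact_closedBall _ _).prod (isCompact_sphere _ _)
  obtain ⟨u, hu⟩ := (NormedSpace.sphere_nonempty
    (x := (0 : EuclideanSpace ℝ (Fin n))) (r := 1)).mpr zero_le_one
  have hKne : (closedBall x₀ 1 ×ˢ sphere (0 : EuclideanSpace ℝ (Fin n)) 1).Nonempty :=
    ⟨(x₀, u), mem_closedBall_self zero_le_one, hu⟩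
  obtain ⟨p, hpK, hmin⟩ := hK.exists_isMinOn hKne hF.continuous.continuousOn
  have hp2 : p.2 ≠ 0 := by
    have := hpK.2
    simp only [mem_sphere_iff_norm, sub_zero] at this
    intro h; rw [h] at this; simp at this
  refine ⟨F p.1 p.2, hF.pos_def _ _ hp2, ?_⟩
  intro z hz v
  by_cases hv : v = 0
  · simp [hv, Finsler.zero hF z]
  · have hu1 : ‖v‖⁻¹ • v ∈ sphere (0 : EuclideanSpace ℝ (Fin n)) 1 := by
      simp [norm_smul, norm_ne_zero_iff.mpr hv, inv_mul_cancel₀]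
    have := hmin (Set.mk_mem_prod hz hu1)
    have h3 : F p.1 p.2 ≤ F z (‖v‖⁻¹ • v) := this
    rw [Finsler.scale hF z v hv, mul_comm ‖v‖ _]
    exact mul_le_mul_of_nonneg_right h3 (norm_nonneg v)

lemma Finsler.exists_unif [Nontrivial (EuclideanSpace ℝ (Fin n))] (hF : IsFinslerMetric F)
    (x₀ : EuclideanSpace ℝ (Fin n)) {ε : ℝ} (hε : 0 < ε) :
    ∃ r : ℝ, 0 < r ∧ r ≤ 1 ∧ ∀ z ∈ closedBall x₀ r, ∀ v,
      F x₀ v ≤ F z v + ε * ‖v‖ ∧ F z v ≤ F x₀ v + ε * ‖v‖ := by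
  have hK : IsCompact (closedBall x₀ 1 ×ˢ sphere (0 : EuclideanSpace ℝ (Fin n)) 1) :=
    (isCompact_closedBall _ _).prod (isCompact_sphere _ _)
  have huc := hK.uniformContinuousOn_of_continuous hF.continuous.continuousOn
  rw [uniformContinuousOn_iff] at huc
  obtain ⟨δ, hδ, hδ'⟩ := huc ε hε
  refine ⟨min (δ/2) 1, lt_min (by linarith) zero_lt_one, min_le_right _ _, ?_⟩
  intro z hz v
  have hz1 : z ∈ closedBall x₀ 1 := closedBall_subset_closedBall (min_le_right _ _) hz
  by_cases hv : v = 0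
  · simp [hv, Finsler.zero hF z, Finsler.zero hF x₀]
  · have hu1 : ‖v‖⁻¹ • v ∈ sphere (0 : EuclideanSpace ℝ (Fin n)) 1 := by
      simp [norm_smul, norm_ne_zero_iff.mpr hv, inv_mul_cancel₀]
    have hdist : dist (z, ‖v‖⁻¹ • v) (x₀, ‖v‖⁻¹ • v) < δ := by
      rw [Prod.dist_eq]
      rw [mem_closedBall] at hz
      refine max_lt (lt_of_le_of_lt (le_trans hz (min_le_left _ _)) (by linarith)) ?_
      simpa using hδ
    have hkey := hδ' _ (Set.mk_mem_prod hz1 hu1) _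
      (Set.mk_mem_prod (mem_closedBall_self zero_le_one) hu1) hdist
    rw [Real.dist_eq, abs_sub_lt_iff] at hkey
    have hFz := Finsler.scale hF z v hv
    have hFx := Finsler.scale hF x₀ v hv
    have hnv : (0:ℝ) < ‖v‖ := norm_pos_iff.mpr hv
    constructor
    · rw [hFz, hFx]
      nlinarith [hkey.2]
    · rw [hFz, hFx]
      nlinarith [hkey.1]

end Constants

section HB

variable {F : EuclideanSpace ℝ (Fin n) → EuclideanSpace ℝ (Fin n) → ℝ}

lemma exists_dual_norm (w : EuclideanSpace ℝ (Fin n)) (hw : w ≠ 0) :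
    ∃ ℓ : EuclideanSpace ℝ (Fin n) →L[ℝ] ℝ, (∀ v, ℓ v ≤ ‖v‖) ∧ ℓ w = ‖w‖ := by
  obtain ⟨g, hg1, hg2⟩ := exists_dual_vector ℝ w (norm_ne_zero_iff.mpr hw)
  refine ⟨g, fun v => ?_, by simpa using hg2⟩
  calc g v ≤ |g v| := le_abs_self _
    _ = ‖g v‖ := (Real.norm_eq_abs _).symm
    _ ≤ ‖g‖ * ‖v‖ := g.le_opNorm v
    _ = ‖v‖ := by rw [hg1, one_mul]

lemma exists_support_functional (hF : IsFinslerMetric F) (x w : EuclideanSpace ℝ (Fin n)) :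
    ∃ ℓ : EuclideanSpace ℝ (Fin n) →L[ℝ] ℝ, (∀ v, ℓ v ≤ F x v) ∧ ℓ w = F x w := by
  by_cases hw : w = 0
  · exact ⟨0, fun v => hF.nonneg x v, by simp [hw, Finsler.zero hF x]⟩
  · have H : ∀ c : ℝ, c • w = 0 → c • (F x w) = 0 := by
      intro c hc
      rcases smul_eq_zero.mp hc with h | h
      · simp [h]
      · exact absurd h hw
    let f := LinearPMap.mkSpanSingleton' (σ := RingHom.id ℝ) w (F x w) H
    have hdom : ∀ p : ↥f.domain, f p ≤ F x ↑p := by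
      intro p
      obtain ⟨a, ha⟩ := Submodule.mem_span_singleton.mp p.2
      have hmem : a • w ∈ f.domain :=
        Submodule.smul_mem _ a (Submodule.mem_span_singleton_self w)
      have hval : f ⟨a • w, hmem⟩ = a • (F x w) :=
        LinearPMap.mkSpanSingleton'_apply (σ := RingHom.id ℝ) w (F x w) H a _
      have hcast : f p = a • (F x w) := by
        rw [← hval]
        congr 1
        exact Subtype.ext ha.symm
      rw [hcast, ← ha]
      rcases le_or_gt 0 a with hha | hha
      · rw [hF.homogeneity x w a hha]; simp [smul_eq_mul]
      · have h1 : a • (F x w) ≤ 0 := by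
          rw [smul_eq_mul]
          exact mul_nonpos_of_nonpos_of_nonneg (le_of_lt hha) (hF.nonneg x w)
        exact le_trans h1 (hF.nonneg x _)
    obtain ⟨g, hg1, hg2⟩ := exists_extension_of_le_sublinear f (F x)
      (fun c hc v => hF.homogeneity x v c (le_of_lt hc)) (hF.subadditivity x) hdom
    refine ⟨LinearMap.toContinuousLinearMap g, fun v => by simpa using hg2 v, ?_⟩
    have hw' : w ∈ f.domain := Submodule.mem_span_singleton_self w
    have := hg1 ⟨w, hw'⟩
    have hfw : f ⟨w, hw'⟩ = F x w := LinearPMap.mkSpanSingleton'_apply_self (σ := RingHom.id ℝ) w (F x w) H _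
    simpa [hfw] using this

end HB

section Rigidity

variable {F : EuclideanSpace ℝ (Fin n) → EuclideanSpace ℝ (Fin n) → ℝ}

lemma velocity_eq (hF : IsFinslerMetric F) (x v w : EuclideanSpace ℝ (Fin n))
    (hv : F x v = 1) (hw : F x w = 1) (hsum : 2 ≤ F x (v + w)) : v = w := by
  have hv0 : v ≠ 0 := by
    intro h; rw [h, Finsler.zero hF x] at hv; norm_num at hv
  have hw0 : w ≠ 0 := by
    intro h; rw [h, Finsler.zero hF x] at hw; norm_num at hw
  have heq : F x (v + w) = 2 := by
    have := hF.subadditivity x v w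
    rw [hv, hw] at this
    linarith
  -- first, v and w are linearly dependent
  have hdep : ¬ LinearIndependent ℝ ![v, w] := by
    intro hind
    set g : ℝ → ℝ := fun s => F x (v + s • w) with hg
    have hvs : ∀ s : ℝ, v + s • w ≠ 0 := by
      intro s hzero
      obtain ⟨-, h2⟩ := linearIndependent_fin2.mp hind
      have : (-s) • w = v := by
        have hv' : v = -(s • w) := by
          rw [eq_neg_iff_add_eq_zero]; exact hzero
        rw [hv']; module
      exact h2 (-s) (by simpa using this)
    have hsmooth : ContDiff ℝ (⊤ : ℕ∞) g := by
      rw [contDiff_iff_contDiffAt]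
      intro s
      have hopen : IsOpen {p : EuclideanSpace ℝ (Fin n) × EuclideanSpace ℝ (Fin n) | p.2 ≠ 0} :=
        isOpen_ne_fun continuous_snd continuous_const
      have h1 : ContDiffAt ℝ (⊤ : ℕ∞) (fun p : EuclideanSpace ℝ (Fin n) × EuclideanSpace ℝ (Fin n) =>
          F p.1 p.2) (x, v + s • w) :=
        hF.smooth.contDiffAt (hopen.mem_nhds (hvs s))
      have h2 : ContDiffAt ℝ (⊤ : ℕ∞) (fun s : ℝ => ((x, v + s • w) :
          EuclideanSpace ℝ (Fin n) × EuclideanSpace ℝ (Fin n))) s :=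
        (contDiff_const.prodMk (contDiff_const.add (contDiff_id.smul contDiff_const))).contDiffAt
      have h3 := h1.comp s h2
      exact h3
    have haff : ∀ s ∈ Ioo (0:ℝ) 1, g s = 1 + s := by
      intro s hs
      have hle : g s ≤ 1 + s := by
        have hdecomp : v + s • w = (1 - s) • v + s • (v + w) := by module
        have := hF.subadditivity x ((1 - s) • v) (s • (v + w))
        rw [← hdecomp] at this
        rw [hg]
        refine le_trans this ?_
        rw [hF.homogeneity x v (1 - s) (by linarith [hs.2]),
          hF.homogeneity x (v + w) s (le_of_lt hs.1), hv, heq]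
        linarith
      have hge : 1 + s ≤ g s := by
        have hdecomp : v + w = (v + s • w) + (1 - s) • w := by module
        have := hF.subadditivity x (v + s • w) ((1 - s) • w)
        rw [← hdecomp, heq, hF.homogeneity x w (1 - s) (by linarith [hs.2]), hw] at this
        rw [hg]
        linarith
      linarith
    have hgd2 : deriv (deriv g) 0 = 0 := by
      have hEq : EqOn (deriv g) (fun _ => (1:ℝ)) (Ioo (0:ℝ) 1) := by
        intro s hs
        have hev : g =ᶠ[nhds s] (fun s => 1 + s) :=
          Set.EqOn.eventuallyEq_of_mem (fun s hs => haff s hs) (isOpen_Ioo.mem_nhds hs)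
        rw [hev.deriv_eq]
        exact (((hasDerivAt_id s).const_add (1:ℝ))).deriv
      have hEq2 : ∀ s ∈ Ioo (0:ℝ) 1, deriv (deriv g) s = 0 := by
        intro s hs
        have hev : deriv g =ᶠ[nhds s] (fun _ => (1:ℝ)) :=
          hEq.eventuallyEq_of_mem (isOpen_Ioo.mem_nhds hs)
        rw [hev.deriv_eq]
        simp
      have hcd : Continuous (deriv (deriv g)) := by
        have hsm : ContDiff ℝ ((⊤:ℕ∞):WithTop ℕ∞) g := hsmooth.of_le (by simp)
        have h1 := (contDiff_infty_iff_deriv.mp hsm).2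
        have h2 := (contDiff_infty_iff_deriv.mp h1).2
        exact h2.continuous
      have hnebot : (nhdsWithin (0:ℝ) (Ioo (0:ℝ) 1)).NeBot := by
        rw [← mem_closure_iff_nhdsWithin_neBot, closure_Ioo one_ne_zero.symm]
        exact ⟨le_rfl, zero_le_one⟩
      have ht1 : Filter.Tendsto (deriv (deriv g)) (nhdsWithin (0:ℝ) (Ioo (0:ℝ) 1))
          (nhds (deriv (deriv g) 0)) :=
        (hcd.tendsto 0).mono_left nhdsWithin_le_nhds
      have ht2 : Filter.Tendsto (deriv (deriv g)) (nhdsWithin (0:ℝ) (Ioo (0:ℝ) 1))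
          (nhds 0) := by
        apply Filter.Tendsto.congr' _ tendsto_const_nhds
        filter_upwards [self_mem_nhdsWithin] with s hs
        exact (hEq2 s hs).symm
      exact tendsto_nhds_unique ht1 ht2
    have hpos := hF.strong_convexity x v w hind
    rw [show (fun s : ℝ => F x (v + s • w)) = g from rfl, iteratedDeriv_succ,
      iteratedDeriv_one, hgd2] at hpos
    exact lt_irrefl 0 hpos
  -- extract the dependence
  have hex : ∃ a : ℝ, a • w = v := by
    by_contra hcon
    push_neg at hcon
    exact hdep (linearIndependent_fin2.mpr ⟨by simpa using hw0, by simpa using hcon⟩)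
  obtain ⟨a, ha⟩ := hex
  rcases le_or_gt 0 a with hha | hha
  · have : F x v = a * F x w := by rw [← ha, hF.homogeneity x w a hha]
    rw [hv, hw, mul_one] at this
    rw [← ha, ← this, one_smul]
  · exfalso
    have hmw : F x ((-a) • (-w)) = 1 := by rw [show (-a) • (-w) = a • w by module, ha, hv]
    have hμ : (-a) * F x (-w) = 1 := by
      rw [← hF.homogeneity x (-w) (-a) (by linarith)]
      exact hmw
    have hμpos : 0 < F x (-w) := hF.pos_def x (-w) (neg_ne_zero.mpr hw0)
    have hvw : v + w = (a + 1) • w := by rw [← ha]; module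
    rcases le_or_gt 0 (a + 1) with h1 | h1
    · have := hF.homogeneity x w (a+1) h1
      rw [← hvw, heq, hw, mul_one] at this
      linarith
    · have h2 : F x ((-(a+1)) • (-w)) = 2 := by
        rw [show (-(a+1)) • (-w) = (a+1) • w by module, ← hvw, heq]
      rw [hF.homogeneity x (-w) (-(a+1)) (by linarith)] at h2
      nlinarith [hμ, h2, hμpos]

end Rigidity

section Ratio

open Metric Filter

variable {F : EuclideanSpace ℝ (Fin n) → EuclideanSpace ℝ (Fin n) → ℝ}
  {M : Set (EuclideanSpace ℝ (Fin n))}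

set_option maxHeartbeats 2000000 in
/-- The key asymptotic computation: if `d_F(a_j, b_j) = K h_j` with `h_j → 0⁺`,
`a_j, b_j → x₀`, and the normalized difference quotients converge to `V`,
then `F x₀ V = K`. -/
lemma dist_ratio [Nontrivial (EuclideanSpace ℝ (Fin n))] (hF : IsFinslerMetric F)
    (hMconv : ∀ x ∈ M, ∀ y ∈ M, ∀ τ ∈ Icc (0:ℝ) 1, x + τ • (y - x) ∈ M)
    (x₀ : EuclideanSpace ℝ (Fin n))
    {c : ℝ} (hc : 0 < c) (hcb : ∀ z ∈ closedBall x₀ 1, ∀ v, c * ‖v‖ ≤ F z v)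
    {a b : ℕ → EuclideanSpace ℝ (Fin n)} (haM : ∀ j, a j ∈ M) (hbM : ∀ j, b j ∈ M)
    (ha : Tendsto a atTop (nhds x₀)) (hb : Tendsto b atTop (nhds x₀))
    {h : ℕ → ℝ} (hh : ∀ j, 0 < h j) (hh0 : Tendsto h atTop (nhds 0))
    {K : ℝ} (hd : ∀ j, finslerDist F M (a j) (b j) = K * h j)
    {V : EuclideanSpace ℝ (Fin n)}
    (hq : Tendsto (fun j => (h j)⁻¹ • (b j - a j)) atTop (nhds V)) :
    F x₀ V = K := by
  set q : ℕ → EuclideanSpace ℝ (Fin n) := fun j => (h j)⁻¹ • (b j - a j) with hqdef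
  have hba : ∀ j, b j - a j = h j • q j :=
    fun j => (smul_inv_smul₀ (ne_of_gt (hh j)) _).symm
  have hFcont : Continuous (fun v => F x₀ v) :=
    hF.continuous.comp (Continuous.prodMk_right x₀)
  have hFq : Tendsto (fun j => F x₀ (q j)) atTop (nhds (F x₀ V)) :=
    (hFcont.tendsto V).comp hq
  have hnq : Tendsto (fun j => ‖q j‖) atTop (nhds ‖V‖) :=
    ((continuous_norm.tendsto V).comp hq)
  have hK : 0 ≤ K := by
    have h0 := finslerDist_nonneg hF M (a 0) (b 0)
    rw [hd 0] at h0
    nlinarith [hh 0]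
  have hup : K ≤ F x₀ V := by
    refine le_of_forall_pos_le_add (fun η hη => ?_)
    set ε : ℝ := η / (‖V‖ + 1) with hεdef
    have hε : 0 < ε := div_pos hη (by positivity)
    obtain ⟨r, hr0, hr1, hrb⟩ := Finsler.exists_unif hF x₀ hε
    have hevj : ∀ᶠ j in atTop, a j ∈ closedBall x₀ r ∧ b j ∈ closedBall x₀ r := by
      filter_upwards [ha (Metric.closedBall_mem_nhds x₀ hr0),
        hb (Metric.closedBall_mem_nhds x₀ hr0)] with j h1 h2
      exact ⟨h1, h2⟩
    have hineq : ∀ᶠ j in atTop, K ≤ F x₀ (q j) + ε * ‖q j‖ := by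
      filter_upwards [hevj] with j hj
      obtain ⟨hj1, hj2⟩ := hj
      rw [mem_closedBall_iff_norm] at hj1 hj2
      have hseg : ∀ τ ∈ Icc (0:ℝ) 1, a j + τ • (b j - a j) ∈ closedBall x₀ r := by
        intro τ hτ
        rw [mem_closedBall_iff_norm]
        have hdec : a j + τ • (b j - a j) - x₀ = (1 - τ) • (a j - x₀) + τ • (b j - x₀) := by
          module
        rw [hdec]
        have h1 : ‖(1 - τ) • (a j - x₀)‖ = (1 - τ) * ‖a j - x₀‖ := by
          rw [norm_smul, Real.norm_eq_abs, abs_of_nonneg (by linarith [hτ.2])]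
        have h2 : ‖τ • (b j - x₀)‖ = τ * ‖b j - x₀‖ := by
          rw [norm_smul, Real.norm_eq_abs, abs_of_nonneg hτ.1]
        have h3 := norm_add_le ((1 - τ) • (a j - x₀)) (τ • (b j - x₀))
        refine le_trans h3 ?_
        rw [h1, h2]
        nlinarith [hτ.1, hτ.2, norm_nonneg (a j - x₀), norm_nonneg (b j - x₀)]
      have hB : finslerDist F M (a j) (b j) ≤ F x₀ (b j - a j) + ε * ‖b j - a j‖ := by
        apply finslerDist_le_of_bound hF
        · intro τ hτ
          exact hMconv _ (haM j) _ (hbM j) τ hτ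
        · intro τ hτ
          have := (hrb _ (hseg τ hτ) (b j - a j)).2
          linarith
      rw [hd j, hba j, hF.homogeneity x₀ (q j) (h j) (le_of_lt (hh j)), norm_smul,
        Real.norm_eq_abs, abs_of_pos (hh j)] at hB
      have := hB
      nlinarith [hh j]
    have hlim : Tendsto (fun j => F x₀ (q j) + ε * ‖q j‖) atTop
        (nhds (F x₀ V + ε * ‖V‖)) := hFq.add (hnq.const_mul ε)
    have hKle : K ≤ F x₀ V + ε * ‖V‖ := ge_of_tendsto hlim hineq
    have : ε * ‖V‖ ≤ η := by
      rw [hεdef]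
      rw [div_mul_eq_mul_div, div_le_iff₀ (by positivity)]
      nlinarith [norm_nonneg V]
    linarith
  have hlow : F x₀ V ≤ K := by
    refine le_of_forall_pos_le_add (fun η hη => ?_)
    set ε : ℝ := c * η / (K + 1) with hεdef
    have hε : 0 < ε := by positivity
    have hεc : 0 < 1 + ε / c := by positivity
    obtain ⟨r, hr0, hr1, hrb⟩ := Finsler.exists_unif hF x₀ hε
    have hev1 : ∀ᶠ j in atTop, ‖a j - x₀‖ ≤ r / 2 := by
      have : Tendsto (fun j => a j - x₀) atTop (nhds 0) := by
        simpa using ha.sub (tendsto_const_nhds (x := x₀))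
      filter_upwards [this (Metric.closedBall_mem_nhds 0 (by linarith : (0:ℝ) < r/2))]
        with j hj
      simpa [mem_closedBall_iff_norm] using hj
    have hev2 : ∀ᶠ j in atTop, K * h j < c * (r / 2) := by
      have hlim : Tendsto (fun j => K * h j) atTop (nhds 0) := by
        simpa using hh0.const_mul K
      exact hlim.eventually_lt_const (by positivity)
    have hineq : ∀ᶠ j in atTop, F x₀ (q j) ≤ (1 + ε / c) * K := by
      filter_upwards [hev1, hev2] with j hj1 hj2
      obtain ⟨ℓ₀, hℓ₀, hℓ₀w⟩ := exists_support_functional hF x₀ (b j - a j)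
      set ℓ : EuclideanSpace ℝ (Fin n) →L[ℝ] ℝ := (1 + ε / c)⁻¹ • ℓ₀ with hℓdef
      have hℓb : ∀ z ∈ closedBall x₀ r, ∀ v, ℓ v ≤ F z v := by
        intro z hz v
        have hz1 : z ∈ closedBall x₀ 1 := closedBall_subset_closedBall hr1 hz
        have h1 : F x₀ v ≤ F z v + ε * ‖v‖ := (hrb z hz v).1
        have h2 : c * ‖v‖ ≤ F z v := hcb z hz1 v
        have h3 : F x₀ v ≤ (1 + ε / c) * F z v := by
          have : ε * ‖v‖ ≤ (ε / c) * F z v := by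
            have h5 := mul_le_mul_of_nonneg_left h2 (le_of_lt (div_pos hε hc))
            have h6 : (ε / c) * (c * ‖v‖) = ε * ‖v‖ := by
              field_simp
            linarith [h5, h6.symm.le, h6.le]
          nlinarith
        have h4 : ℓ v = (1 + ε / c)⁻¹ * ℓ₀ v := rfl
        rw [h4]
        rw [inv_mul_le_iff₀ hεc]
        exact le_trans (hℓ₀ v) h3
      have hlb := finslerDist_lower_bound (M := M) hF x₀ hc hr0
        (fun z hz v => hcb z (closedBall_subset_closedBall hr1 hz) v) ℓ hℓb
        (Or.inl hj1) (lengthSet_nonempty hF (hMconv _ (haM j) _ (hbM j)))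
      rw [hd j] at hlb
      have hml : ℓ (b j - a j) ≤ K * h j := by
        rcases min_le_iff.mp hlb with h | h
        · linarith
        · exact h
      have hval : ℓ (b j - a j) = (1 + ε / c)⁻¹ * (h j * F x₀ (q j)) := by
        have : ℓ (b j - a j) = (1 + ε / c)⁻¹ * ℓ₀ (b j - a j) := rfl
        rw [this, hℓ₀w, hba j, hF.homogeneity x₀ (q j) (h j) (le_of_lt (hh j))]
      rw [hval, inv_mul_le_iff₀ hεc] at hml
      have hj0 := hh j
      have := hml
      rw [show (1 + ε / c) * (K * h j) = ((1 + ε / c) * K) * h j by ring] at this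
      exact le_of_mul_le_mul_right (by linarith) hj0
    have hKle : F x₀ V ≤ (1 + ε / c) * K := le_of_tendsto hFq hineq
    have hεcK : (ε / c) * K ≤ η := by
      have : ε / c = η / (K + 1) := by
        rw [hεdef]; field_simp
      rw [this, div_mul_eq_mul_div, div_le_iff₀ (by positivity)]
      nlinarith
    nlinarith
  exact le_antisymm hlow hup

end Ratio

section Velocities

open Filter Metric

variable {α : ℝ → EuclideanSpace ℝ (Fin n)} {I : Set ℝ} {t₀ : ℝ} {c : ℝ}

lemma quot_norm_le (hc : 0 < c) {x : ℝ} (hxt : x ≠ t₀)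
    (hL : c * ‖α x - α t₀‖ ≤ |x - t₀|) :
    ‖(x - t₀)⁻¹ • (α x - α t₀)‖ ≤ 1 / c := by
  have habs : (0:ℝ) < |x - t₀| := abs_pos.mpr (sub_ne_zero.mpr hxt)
  rw [norm_smul, Real.norm_eq_abs, abs_inv]
  rw [inv_mul_le_iff₀ habs, mul_one_div, le_div_iff₀ hc]
  nlinarith

lemma tendsto_shift {X : Type*} [TopologicalSpace X] {u : ℕ → X} {l : X}
    (h : Filter.Tendsto u atTop (nhds l)) (N : ℕ) :
    Filter.Tendsto (fun k => u (k + N)) atTop (nhds l) :=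
  h.comp (tendsto_add_atTop_nat N)

/-- Existence of an arrival velocity. -/
lemma arrival_exists (hc : 0 < c) (hI : I.OrdConnected) (ht₀ : t₀ ∈ I)
    (hLip : ∀ t ∈ I, |t - t₀| < c / 2 → c * ‖α t - α t₀‖ ≤ |t - t₀|)
    {t₁ : ℝ} (ht₁ : t₁ ∈ I) (ht₁lt : t₁ < t₀) :
    ∃ v, IsArrivalVelocity α I t₀ v := by
  set δ : ℝ := min (c / 4) (t₀ - t₁) with hδdef
  have hδ : 0 < δ := lt_min (by linarith) (by linarith)
  set u : ℕ → ℝ := fun j => t₀ - δ / (j + 2) with hudef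
  have hquot : ∀ j : ℕ, 0 < δ / ((j:ℝ) + 2) ∧ δ / ((j:ℝ) + 2) ≤ δ / 2 := by
    intro j
    constructor
    · positivity
    · apply div_le_div_of_nonneg_left (le_of_lt hδ) (by norm_num)
      · have : (0:ℝ) ≤ (j:ℝ) := Nat.cast_nonneg j
        linarith
  have huI : ∀ j, u j ∈ I ∧ u j < t₀ := by
    intro j
    obtain ⟨h1, h2⟩ := hquot j
    have hd2 : δ / 2 ≤ (t₀ - t₁) / 2 := by
      have : δ ≤ t₀ - t₁ := min_le_right _ _
      linarith
    constructor
    · apply hI.out ht₁ ht₀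
      constructor
      · simp only [hudef]; linarith
      · simp only [hudef]; linarith
    · simp only [hudef]; linarith
  have htu : Filter.Tendsto u atTop (nhds t₀) := by
    have h0 : Filter.Tendsto (fun j : ℕ => δ / ((j:ℝ) + 2)) atTop (nhds 0) := by
      have := (tendsto_const_div_atTop_nhds_zero_nat δ).comp (tendsto_add_atTop_nat 2)
      apply this.congr
      intro j
      simp only [Function.comp_apply]
      push_cast
      ring
    have := tendsto_const_nhds (x := t₀) (f := atTop (α := ℕ)) |>.sub h0
    simpa using this
  have hsmall : ∀ j, |u j - t₀| < c / 2 := by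
    intro j
    obtain ⟨h1, h2⟩ := hquot j
    have hd4 : δ ≤ c / 4 := min_le_left _ _
    rw [show u j - t₀ = -(δ / ((j:ℝ) + 2)) by simp only [hudef]; ring, abs_neg,
      abs_of_pos h1]
    linarith
  have hbdd : ∀ j, (u j - t₀)⁻¹ • (α (u j) - α t₀) ∈ closedBall (0 : EuclideanSpace ℝ (Fin n)) (1 / c) := by
    intro j
    rw [mem_closedBall_zero_iff]
    exact quot_norm_le hc (ne_of_lt (huI j).2) (hLip (u j) (huI j).1 (hsmall j))
  obtain ⟨v, -, φ, hφ, hconv⟩ := tendsto_subseq_of_bounded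
    (isBounded_closedBall (x := (0 : EuclideanSpace ℝ (Fin n))) (r := 1 / c)) hbdd
  refine ⟨v, u ∘ φ, fun k => huI (φ k), htu.comp hφ.tendsto_atTop, hconv⟩

/-- Existence of a departure velocity. -/
lemma departure_exists (hc : 0 < c) (hI : I.OrdConnected) (ht₀ : t₀ ∈ I)
    (hLip : ∀ t ∈ I, |t - t₀| < c / 2 → c * ‖α t - α t₀‖ ≤ |t - t₀|)
    {t₁ : ℝ} (ht₁ : t₁ ∈ I) (ht₁lt : t₀ < t₁) :
    ∃ v, IsDepartureVelocity α I t₀ v := by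
  set δ : ℝ := min (c / 4) (t₁ - t₀) with hδdef
  have hδ : 0 < δ := lt_min (by linarith) (by linarith)
  set u : ℕ → ℝ := fun j => t₀ + δ / (j + 2) with hudef
  have hquot : ∀ j : ℕ, 0 < δ / ((j:ℝ) + 2) ∧ δ / ((j:ℝ) + 2) ≤ δ / 2 := by
    intro j
    constructor
    · positivity
    · apply div_le_div_of_nonneg_left (le_of_lt hδ) (by norm_num)
      · have : (0:ℝ) ≤ (j:ℝ) := Nat.cast_nonneg j
        linarith
  have huI : ∀ j, u j ∈ I ∧ t₀ < u j := by
    intro j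
    obtain ⟨h1, h2⟩ := hquot j
    have hd2 : δ / 2 ≤ (t₁ - t₀) / 2 := by
      have : δ ≤ t₁ - t₀ := min_le_right _ _
      linarith
    constructor
    · apply hI.out ht₀ ht₁
      constructor
      · simp only [hudef]; linarith
      · simp only [hudef]; linarith
    · simp only [hudef]; linarith
  have htu : Filter.Tendsto u atTop (nhds t₀) := by
    have h0 : Filter.Tendsto (fun j : ℕ => δ / ((j:ℝ) + 2)) atTop (nhds 0) := by
      have := (tendsto_const_div_atTop_nhds_zero_nat δ).comp (tendsto_add_atTop_nat 2)
      apply this.congr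
      intro j
      simp only [Function.comp_apply]
      push_cast
      ring
    have := tendsto_const_nhds (x := t₀) (f := atTop (α := ℕ)) |>.add h0
    simpa using this
  have hsmall : ∀ j, |u j - t₀| < c / 2 := by
    intro j
    obtain ⟨h1, h2⟩ := hquot j
    have hd4 : δ ≤ c / 4 := min_le_left _ _
    rw [show u j - t₀ = δ / ((j:ℝ) + 2) by simp only [hudef]; ring, abs_of_pos h1]
    linarith
  have hbdd : ∀ j, (u j - t₀)⁻¹ • (α (u j) - α t₀) ∈ closedBall (0 : EuclideanSpace ℝ (Fin n)) (1 / c) := by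
    intro j
    rw [mem_closedBall_zero_iff]
    exact quot_norm_le hc (ne_of_gt (huI j).2) (hLip (u j) (huI j).1 (hsmall j))
  obtain ⟨v, -, φ, hφ, hconv⟩ := tendsto_subseq_of_bounded
    (isBounded_closedBall (x := (0 : EuclideanSpace ℝ (Fin n))) (r := 1 / c)) hbdd
  refine ⟨v, u ∘ φ, fun k => huI (φ k), htu.comp hφ.tendsto_atTop, hconv⟩

/-- If all departure velocities equal `V`, the right slope converges to `V`. -/
lemma slope_tendsto_right (hc : 0 < c)
    (hLip : ∀ t ∈ I, |t - t₀| < c / 2 → c * ‖α t - α t₀‖ ≤ |t - t₀|)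
    {V : EuclideanSpace ℝ (Fin n)}
    (huniq : ∀ w, IsDepartureVelocity α I t₀ w → w = V) :
    Filter.Tendsto (slope α t₀) (nhdsWithin t₀ (I ∩ Ioi t₀)) (nhds V) := by
  apply tendsto_of_subseq_tendsto
  intro ns hns
  have hmem : ∀ᶠ k in atTop, ns k ∈ I ∩ Ioi t₀ := eventually_mem_of_tendsto_nhdsWithin hns
  have htt : Filter.Tendsto ns atTop (nhds t₀) := hns.mono_right nhdsWithin_le_nhds
  have hsmall : ∀ᶠ k in atTop, |ns k - t₀| < c / 2 := by
    have h1 : Filter.Tendsto (fun k => |ns k - t₀|) atTop (nhds 0) := by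
      have := (htt.sub (tendsto_const_nhds (x := t₀))).norm
      simpa [Real.norm_eq_abs] using this
    exact h1.eventually_lt_const (by linarith)
  obtain ⟨N, hN⟩ := eventually_atTop.mp (hmem.and hsmall)
  set u : ℕ → ℝ := fun k => ns (k + N) with hudef
  have hu : ∀ k, (u k ∈ I ∧ t₀ < u k) ∧ |u k - t₀| < c / 2 := by
    intro k
    have := hN (k + N) (Nat.le_add_left N k)
    exact ⟨⟨this.1.1, this.1.2⟩, this.2⟩
  have hbdd : ∀ k, slope α t₀ (u k) ∈ closedBall (0 : EuclideanSpace ℝ (Fin n)) (1 / c) := by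
    intro k
    rw [mem_closedBall_zero_iff, slope_def_module]
    exact quot_norm_le hc (ne_of_gt (hu k).1.2) (hLip (u k) (hu k).1.1 (hu k).2)
  obtain ⟨z, -, φ, hφ, hconv⟩ := tendsto_subseq_of_bounded
    (isBounded_closedBall (x := (0 : EuclideanSpace ℝ (Fin n))) (r := 1 / c)) hbdd
  have hdep : IsDepartureVelocity α I t₀ z := by
    refine ⟨u ∘ φ, fun k => (hu (φ k)).1, (tendsto_shift htt N).comp hφ.tendsto_atTop, ?_⟩
    exact hconv.congr (fun k => slope_def_module α t₀ (u (φ k)))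
  rw [huniq z hdep] at hconv
  exact ⟨fun k => φ k + N, hconv⟩

/-- If all arrival velocities equal `V`, the left slope converges to `V`. -/
lemma slope_tendsto_left (hc : 0 < c)
    (hLip : ∀ t ∈ I, |t - t₀| < c / 2 → c * ‖α t - α t₀‖ ≤ |t - t₀|)
    {V : EuclideanSpace ℝ (Fin n)}
    (huniq : ∀ w, IsArrivalVelocity α I t₀ w → w = V) :
    Filter.Tendsto (slope α t₀) (nhdsWithin t₀ (I ∩ Iio t₀)) (nhds V) := by
  apply tendsto_of_subseq_tendsto
  intro ns hns
  have hmem : ∀ᶠ k in atTop, ns k ∈ I ∩ Iio t₀ := eventually_mem_of_tendsto_nhdsWithin hns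
  have htt : Filter.Tendsto ns atTop (nhds t₀) := hns.mono_right nhdsWithin_le_nhds
  have hsmall : ∀ᶠ k in atTop, |ns k - t₀| < c / 2 := by
    have h1 : Filter.Tendsto (fun k => |ns k - t₀|) atTop (nhds 0) := by
      have := (htt.sub (tendsto_const_nhds (x := t₀))).norm
      simpa [Real.norm_eq_abs] using this
    exact h1.eventually_lt_const (by linarith)
  obtain ⟨N, hN⟩ := eventually_atTop.mp (hmem.and hsmall)
  set u : ℕ → ℝ := fun k => ns (k + N) with hudef
  have hu : ∀ k, (u k ∈ I ∧ u k < t₀) ∧ |u k - t₀| < c / 2 := by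
    intro k
    have := hN (k + N) (Nat.le_add_left N k)
    exact ⟨⟨this.1.1, this.1.2⟩, this.2⟩
  have hbdd : ∀ k, slope α t₀ (u k) ∈ closedBall (0 : EuclideanSpace ℝ (Fin n)) (1 / c) := by
    intro k
    rw [mem_closedBall_zero_iff, slope_def_module]
    exact quot_norm_le hc (ne_of_lt (hu k).1.2) (hLip (u k) (hu k).1.1 (hu k).2)
  obtain ⟨z, -, φ, hφ, hconv⟩ := tendsto_subseq_of_bounded
    (isBounded_closedBall (x := (0 : EuclideanSpace ℝ (Fin n))) (r := 1 / c)) hbdd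
  have harr : IsArrivalVelocity α I t₀ z := by
    refine ⟨u ∘ φ, fun k => (hu (φ k)).1, (tendsto_shift htt N).comp hφ.tendsto_atTop, ?_⟩
    exact hconv.congr (fun k => slope_def_module α t₀ (u (φ k)))
  rw [huniq z harr] at hconv
  exact ⟨fun k => φ k + N, hconv⟩

end Velocities

open Filter Metric in
set_option maxHeartbeats 2000000 in
/-- **Lemma A.2 of the paper**: let `F` be a Finsler metric on `ℝⁿ` (`n = m + 1 ≥ 1`),
`M = {x : xₙ ≥ 0}` a closed half-space with induced distance `d_F`, and `α : I → M` a
distance realizing curve, `t₀ ∈ I`, `x₀ = α(t₀)`.  Then: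
(1) if `t₀ > inf I` the curve `α` has at least one arrival velocity at `t₀`, and if
`t₀ < sup I` it has at least one departure velocity at `t₀`;
(2) every arrival or departure velocity `v` of `α` at `t₀` satisfies `F(x₀, v) = 1`;
(3) if `t₀` is an interior point of the interval `I` and `α` is differentiable on one
side at `t₀`, then `α` is differentiable at `t₀`. -/
theorem distance_realizing_one_sided_velocities
    (m : ℕ)
    (F : EuclideanSpace ℝ (Fin (m + 1)) → EuclideanSpace ℝ (Fin (m + 1)) → ℝ)
    (hF : IsFinslerMetric F)
    (I : Set ℝ) (hI : I.OrdConnected)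
    (α : ℝ → EuclideanSpace ℝ (Fin (m + 1)))
    (hα : IsDistanceRealizing F {x : EuclideanSpace ℝ (Fin (m + 1)) | 0 ≤ x (Fin.last m)}
      I α)
    (t₀ : ℝ) (ht₀ : t₀ ∈ I) :
    (((∃ t ∈ I, t < t₀) → ∃ v, IsArrivalVelocity α I t₀ v) ∧
      ((∃ t ∈ I, t₀ < t) → ∃ v, IsDepartureVelocity α I t₀ v)) ∧
    (∀ v, IsArrivalVelocity α I t₀ v ∨ IsDepartureVelocity α I t₀ v →
      F (α t₀) v = 1) ∧
    ((∃ t ∈ I, t < t₀) → (∃ t ∈ I, t₀ < t) →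
      (DifferentiableWithinAt ℝ α (I ∩ Set.Iic t₀) t₀ ∨
        DifferentiableWithinAt ℝ α (I ∩ Set.Ici t₀) t₀) →
      DifferentiableWithinAt ℝ α I t₀) := by
  set M : Set (EuclideanSpace ℝ (Fin (m + 1))) :=
    {x : EuclideanSpace ℝ (Fin (m + 1)) | 0 ≤ x (Fin.last m)} with hMdef
  obtain ⟨hM, hd⟩ := hα
  have hx₀M : α t₀ ∈ M := hM t₀ ht₀
  -- convexity of the half-space
  have hMconv : ∀ x ∈ M, ∀ y ∈ M, ∀ τ ∈ Icc (0:ℝ) 1, x + τ • (y - x) ∈ M := by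
    intro x hx y hy τ hτ
    simp only [hMdef, mem_setOf_eq] at hx hy ⊢
    have happ : (x + τ • (y - x)) (Fin.last m)
        = x (Fin.last m) + τ * (y (Fin.last m) - x (Fin.last m)) := by
      simp [PiLp.add_apply, PiLp.smul_apply, PiLp.sub_apply, smul_eq_mul]
    rw [happ]
    nlinarith [hτ.1, hτ.2]
  obtain ⟨c, hc, hcb⟩ := Finsler.exists_lower hF (α t₀)
  -- the flip identity for difference quotients
  have hflip : ∀ (s t : ℝ) (x y : EuclideanSpace ℝ (Fin (m + 1))),
      (s - t)⁻¹ • (x - y) = (t - s)⁻¹ • (y - x) := by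
    intro s t x y
    rw [show t - s = -(s - t) by ring, inv_neg, neg_smul, ← smul_neg, neg_sub]
  -- local Lipschitz estimate
  have hLip : ∀ t ∈ I, |t - t₀| < c / 2 → c * ‖α t - α t₀‖ ≤ |t - t₀| := by
    intro t htI habs
    by_cases hw : α t = α t₀
    · rw [hw]; simp
    rcases le_or_gt t t₀ with hle | hlt
    · have hdist := hd t htI t₀ ht₀ hle
      have hwne : α t₀ - α t ≠ 0 := sub_ne_zero.mpr (Ne.symm hw)
      obtain ⟨ℓ₀, hℓ₀, hℓ₀w⟩ := exists_dual_norm _ hwne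
      have hℓb : ∀ z ∈ closedBall (α t₀) 1, ∀ v, (c • ℓ₀) v ≤ F z v := by
        intro z hz v
        have h1 := hcb z hz v
        have h2 := hℓ₀ v
        simp only [ContinuousLinearMap.smul_apply, smul_eq_mul]
        nlinarith
      have hlb := finslerDist_lower_bound (M := M) hF (α t₀) hc one_pos hcb (c • ℓ₀) hℓb
        (Or.inr (by simp)) (lengthSet_nonempty hF (hMconv _ (hM t htI) _ hx₀M))
      rw [hdist] at hlb
      have hval : (c • ℓ₀) (α t₀ - α t) = c * ‖α t₀ - α t‖ := by
        simp only [ContinuousLinearMap.smul_apply, smul_eq_mul, hℓ₀w]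
      rw [hval] at hlb
      have habs' : |t - t₀| = t₀ - t := by rw [abs_sub_comm, abs_of_nonneg (by linarith)]
      rw [habs']
      rcases min_le_iff.mp hlb with h | h
      · exfalso; rw [habs'] at habs; linarith
      · rw [norm_sub_rev]; linarith
    · have hdist := hd t₀ ht₀ t htI (le_of_lt hlt)
      have hwne : α t - α t₀ ≠ 0 := sub_ne_zero.mpr hw
      obtain ⟨ℓ₀, hℓ₀, hℓ₀w⟩ := exists_dual_norm _ hwne
      have hℓb : ∀ z ∈ closedBall (α t₀) 1, ∀ v, (c • ℓ₀) v ≤ F z v := by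
        intro z hz v
        have h1 := hcb z hz v
        have h2 := hℓ₀ v
        simp only [ContinuousLinearMap.smul_apply, smul_eq_mul]
        nlinarith
      have hlb := finslerDist_lower_bound (M := M) hF (α t₀) hc one_pos hcb (c • ℓ₀) hℓb
        (Or.inl (by simp)) (lengthSet_nonempty hF (hMconv _ hx₀M _ (hM t htI)))
      rw [hdist] at hlb
      have hval : (c • ℓ₀) (α t - α t₀) = c * ‖α t - α t₀‖ := by
        simp only [ContinuousLinearMap.smul_apply, smul_eq_mul, hℓ₀w]
      rw [hval] at hlb
      have habs' : |t - t₀| = t - t₀ := abs_of_nonneg (by linarith)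
      rw [habs']
      rcases min_le_iff.mp hlb with h | h
      · exfalso; rw [habs'] at habs; linarith
      · linarith
  -- part 1
  have hpart1L : (∃ t ∈ I, t < t₀) → ∃ v, IsArrivalVelocity α I t₀ v := by
    rintro ⟨t₁, ht₁I, ht₁⟩
    exact arrival_exists hc hI ht₀ hLip ht₁I ht₁
  have hpart1R : (∃ t ∈ I, t₀ < t) → ∃ v, IsDepartureVelocity α I t₀ v := by
    rintro ⟨t₁, ht₁I, ht₁⟩
    exact departure_exists hc hI ht₀ hLip ht₁I ht₁
  -- limit of the curve along a sequence with convergent difference quotients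
  have halim : ∀ (u : ℕ → ℝ) (v : EuclideanSpace ℝ (Fin (m + 1))), (∀ j, u j ≠ t₀) →
      Tendsto u atTop (nhds t₀) →
      Tendsto (fun j => (u j - t₀)⁻¹ • (α (u j) - α t₀)) atTop (nhds v) →
      Tendsto (fun j => α (u j)) atTop (nhds (α t₀)) := by
    intro u v hne htu hq
    have h0 : Tendsto (fun j => u j - t₀) atTop (nhds 0) := by
      simpa using htu.sub (tendsto_const_nhds (x := t₀))
    have h1 := h0.smul hq
    rw [zero_smul] at h1
    have h2 : Tendsto (fun j => α (u j) - α t₀) atTop (nhds 0) := by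
      apply h1.congr
      intro j
      exact smul_inv_smul₀ (sub_ne_zero.mpr (hne j)) _
    have h3 := h2.add (tendsto_const_nhds (x := α t₀))
    simpa using h3
  -- part 2
  have hpart2 : ∀ v, IsArrivalVelocity α I t₀ v ∨ IsDepartureVelocity α I t₀ v →
      F (α t₀) v = 1 := by
    rintro v (⟨u, huI, htu, hq⟩ | ⟨u, huI, htu, hq⟩)
    · have hne : ∀ j, u j ≠ t₀ := fun j => ne_of_lt (huI j).2
      have hh : ∀ j, 0 < t₀ - u j := fun j => sub_pos.mpr (huI j).2
      have hh0 : Tendsto (fun j => t₀ - u j) atTop (nhds 0) := by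
        simpa using (tendsto_const_nhds (x := t₀)).sub htu
      have ha : Tendsto (fun j => α (u j)) atTop (nhds (α t₀)) := halim u v hne htu hq
      have hq' : Tendsto (fun j => (t₀ - u j)⁻¹ • (α t₀ - α (u j))) atTop (nhds v) :=
        hq.congr (fun j => hflip (u j) t₀ (α (u j)) (α t₀))
      have hd' : ∀ j, finslerDist F M (α (u j)) (α t₀) = 1 * (t₀ - u j) := by
        intro j
        rw [hd (u j) (huI j).1 t₀ ht₀ (le_of_lt (huI j).2), one_mul]
      exact dist_ratio hF hMconv (α t₀) hc hcb (fun j => hM _ (huI j).1)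
        (fun _ => hx₀M) ha tendsto_const_nhds hh hh0 hd' hq'
    · have hne : ∀ j, u j ≠ t₀ := fun j => ne_of_gt (huI j).2
      have hh : ∀ j, 0 < u j - t₀ := fun j => sub_pos.mpr (huI j).2
      have hh0 : Tendsto (fun j => u j - t₀) atTop (nhds 0) := by
        simpa using htu.sub (tendsto_const_nhds (x := t₀))
      have hb : Tendsto (fun j => α (u j)) atTop (nhds (α t₀)) := halim u v hne htu hq
      have hd' : ∀ j, finslerDist F M (α t₀) (α (u j)) = 1 * (u j - t₀) := by
        intro j
        rw [hd t₀ ht₀ (u j) (huI j).1 (le_of_lt (huI j).2), one_mul]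
      exact dist_ratio hF hMconv (α t₀) hc hcb (fun _ => hx₀M)
        (fun j => hM _ (huI j).1) tendsto_const_nhds hb hh hh0 hd' hq
  -- part 3
  have hset1 : (I ∩ Iic t₀) \ {t₀} = I ∩ Iio t₀ := by
    ext x
    simp only [mem_diff, mem_inter_iff, mem_Iic, mem_Iio, mem_singleton_iff]
    constructor
    · rintro ⟨⟨h1, h2⟩, h3⟩; exact ⟨h1, lt_of_le_of_ne h2 h3⟩
    · rintro ⟨h1, h2⟩; exact ⟨⟨h1, le_of_lt h2⟩, ne_of_lt h2⟩
  have hset2 : (I ∩ Ici t₀) \ {t₀} = I ∩ Ioi t₀ := by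
    ext x
    simp only [mem_diff, mem_inter_iff, mem_Ici, mem_Ioi, mem_singleton_iff]
    constructor
    · rintro ⟨⟨h1, h2⟩, h3⟩; exact ⟨h1, lt_of_le_of_ne h2 (Ne.symm h3)⟩
    · rintro ⟨h1, h2⟩; exact ⟨⟨h1, le_of_lt h2⟩, (ne_of_gt h2)⟩
  have hpart3 : (∃ t ∈ I, t < t₀) → (∃ t ∈ I, t₀ < t) →
      (DifferentiableWithinAt ℝ α (I ∩ Set.Iic t₀) t₀ ∨
        DifferentiableWithinAt ℝ α (I ∩ Set.Ici t₀) t₀) →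
      DifferentiableWithinAt ℝ α I t₀ := by
    rintro ⟨t₁, ht₁I, ht₁⟩ ⟨t₂, ht₂I, ht₂⟩ hside
    have hIsub : I ⊆ (I ∩ Iic t₀) ∪ (I ∩ Ici t₀) := by
      intro x hx
      rcases le_total x t₀ with h | h
      · exact Or.inl ⟨hx, h⟩
      · exact Or.inr ⟨hx, h⟩
    rcases hside with hL | hR
    · -- left differentiable
      set V := derivWithin α (I ∩ Iic t₀) t₀ with hVdef
      have hVd : HasDerivWithinAt α V (I ∩ Iic t₀) t₀ := hL.hasDerivWithinAt
      have hslopeL : Tendsto (slope α t₀) (nhdsWithin t₀ (I ∩ Iio t₀)) (nhds V) := by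
        have := hasDerivWithinAt_iff_tendsto_slope.mp hVd
        rwa [hset1] at this
      have harr_eq : ∀ w, IsArrivalVelocity α I t₀ w → w = V := by
        rintro w ⟨u, huI, htu, hq⟩
        have humem : Tendsto u atTop (nhdsWithin t₀ (I ∩ Iio t₀)) :=
          tendsto_nhdsWithin_of_tendsto_nhds_of_eventually_within u htu
            (Eventually.of_forall (fun j => ⟨(huI j).1, (huI j).2⟩))
        have h2 : Tendsto (fun j => slope α t₀ (u j)) atTop (nhds V) := hslopeL.comp humem
        have h3 : Tendsto (fun j => slope α t₀ (u j)) atTop (nhds w) :=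
          hq.congr (fun j => (slope_def_module α t₀ (u j)).symm)
        exact tendsto_nhds_unique h3 h2
      obtain ⟨v₁, hv₁⟩ := hpart1L ⟨t₁, ht₁I, ht₁⟩
      have hVarr : IsArrivalVelocity α I t₀ V := by
        rw [← harr_eq v₁ hv₁]; exact hv₁
      have hFV : F (α t₀) V = 1 := hpart2 V (Or.inl hVarr)
      have hdep_eq : ∀ w, IsDepartureVelocity α I t₀ w → w = V := by
        intro w hw
        have hFw : F (α t₀) w = 1 := hpart2 w (Or.inr hw)
        obtain ⟨u', hu'I, htu', hq'⟩ := hw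
        have hh' : ∀ j, 0 < u' j - t₀ := fun j => sub_pos.mpr (hu'I j).2
        have hev : ∀ᶠ j in atTop, u' j - t₀ < t₀ - t₁ := by
          have h0 : Tendsto (fun j => u' j - t₀) atTop (nhds 0) := by
            simpa using htu'.sub (tendsto_const_nhds (x := t₀))
          exact h0.eventually_lt_const (by linarith)
        obtain ⟨N, hN⟩ := eventually_atTop.mp hev
        set p : ℕ → ℝ := fun k => t₀ - (u' (k + N) - t₀) with hpdef
        set h : ℕ → ℝ := fun k => u' (k + N) - t₀ with hhdef
        have hhk : ∀ k, 0 < h k := fun k => hh' (k + N)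
        have hpI : ∀ k, p k ∈ I ∧ p k < t₀ := by
          intro k
          have h1 := hN (k + N) (Nat.le_add_left N k)
          constructor
          · apply hI.out ht₁I ht₀
            constructor
            · simp only [hpdef]; linarith [hh' (k + N)]
            · simp only [hpdef]; linarith [hh' (k + N)]
          · simp only [hpdef]; linarith [hh' (k + N)]
        have hh0 : Tendsto h atTop (nhds 0) := by
          have := (tendsto_shift htu' N).sub (tendsto_const_nhds (x := t₀))
          simpa [hhdef] using this
        have htp : Tendsto p atTop (nhds t₀) := by
          have := (tendsto_const_nhds (x := t₀) (f := atTop (α := ℕ))).sub hh0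
          simpa [hpdef, hhdef] using this
        have hd2 : ∀ k, finslerDist F M (α (p k)) (α (u' (k + N))) = 2 * h k := by
          intro k
          rw [hd (p k) (hpI k).1 (u' (k + N)) (hu'I (k + N)).1
            (by linarith [(hpI k).2, (hu'I (k + N)).2])]
          simp only [hpdef, hhdef]; ring
        -- decompose the difference quotient
        have hq1 : Tendsto (fun k => (h k)⁻¹ • (α (u' (k + N)) - α t₀)) atTop (nhds w) := by
          have := tendsto_shift hq' N
          exact this
        have hq2 : Tendsto (fun k => (h k)⁻¹ • (α t₀ - α (p k))) atTop (nhds V) := by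
          have hpmem : Tendsto p atTop (nhdsWithin t₀ (I ∩ Iio t₀)) :=
            tendsto_nhdsWithin_of_tendsto_nhds_of_eventually_within p htp
              (Eventually.of_forall (fun k => ⟨(hpI k).1, (hpI k).2⟩))
          have h2 : Tendsto (fun k => slope α t₀ (p k)) atTop (nhds V) := hslopeL.comp hpmem
          apply h2.congr
          intro k
          rw [slope_def_module]
          rw [show p k - t₀ = -(h k) by simp only [hpdef, hhdef]; ring]
          rw [show (-(h k))⁻¹ • (α (p k) - α t₀) = (h k)⁻¹ • (α t₀ - α (p k)) by
            rw [inv_neg, neg_smul, ← smul_neg, neg_sub]]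
        have hqsum : Tendsto (fun k => (h k)⁻¹ • (α (u' (k + N)) - α (p k))) atTop
            (nhds (w + V)) := by
          have := hq1.add hq2
          apply this.congr
          intro k
          rw [← smul_add]
          congr 1
          abel
        have hap : Tendsto (fun k => α (p k)) atTop (nhds (α t₀)) := by
          apply halim p V (fun k => ne_of_lt (hpI k).2) htp
          have := hq2.congr (fun k => by
            rw [show (h k)⁻¹ • (α t₀ - α (p k)) = (p k - t₀)⁻¹ • (α (p k) - α t₀) by
              rw [hflip (p k) t₀ (α (p k)) (α t₀),
                show t₀ - p k = h k by simp only [hpdef]; ring]])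
          exact this
        have hau : Tendsto (fun k => α (u' (k + N))) atTop (nhds (α t₀)) := by
          apply halim (fun k => u' (k + N)) w (fun k => ne_of_gt (hu'I (k + N)).2)
            (tendsto_shift htu' N)
          exact tendsto_shift hq' N
        have hFsum : F (α t₀) (w + V) = 2 :=
          dist_ratio hF hMconv (α t₀) hc hcb (fun k => hM _ (hpI k).1)
            (fun k => hM _ (hu'I (k + N)).1) hap hau hhk hh0 hd2 hqsum
        have := velocity_eq hF (α t₀) V w hFV hFw (by rw [show V + w = w + V by abel, hFsum])
        exact this.symm
      have hslopeR : Tendsto (slope α t₀) (nhdsWithin t₀ (I ∩ Ioi t₀)) (nhds V) :=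
        slope_tendsto_right hc hLip hdep_eq
      have hVdR : HasDerivWithinAt α V (I ∩ Ici t₀) t₀ := by
        rw [hasDerivWithinAt_iff_tendsto_slope, hset2]
        exact hslopeR
      exact (((hVd.union hVdR).mono hIsub)).differentiableWithinAt
    · -- right differentiable
      set V := derivWithin α (I ∩ Ici t₀) t₀ with hVdef
      have hVd : HasDerivWithinAt α V (I ∩ Ici t₀) t₀ := hR.hasDerivWithinAt
      have hslopeR : Tendsto (slope α t₀) (nhdsWithin t₀ (I ∩ Ioi t₀)) (nhds V) := by
        have := hasDerivWithinAt_iff_tendsto_slope.mp hVd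
        rwa [hset2] at this
      have hdep_eq : ∀ w, IsDepartureVelocity α I t₀ w → w = V := by
        rintro w ⟨u, huI, htu, hq⟩
        have humem : Tendsto u atTop (nhdsWithin t₀ (I ∩ Ioi t₀)) :=
          tendsto_nhdsWithin_of_tendsto_nhds_of_eventually_within u htu
            (Eventually.of_forall (fun j => ⟨(huI j).1, (huI j).2⟩))
        have h2 : Tendsto (fun j => slope α t₀ (u j)) atTop (nhds V) := hslopeR.comp humem
        have h3 : Tendsto (fun j => slope α t₀ (u j)) atTop (nhds w) :=
          hq.congr (fun j => (slope_def_module α t₀ (u j)).symm)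
        exact tendsto_nhds_unique h3 h2
      obtain ⟨v₁, hv₁⟩ := hpart1R ⟨t₂, ht₂I, ht₂⟩
      have hVdep : IsDepartureVelocity α I t₀ V := by
        rw [← hdep_eq v₁ hv₁]; exact hv₁
      have hFV : F (α t₀) V = 1 := hpart2 V (Or.inr hVdep)
      have harr_eq : ∀ w, IsArrivalVelocity α I t₀ w → w = V := by
        intro w hw
        have hFw : F (α t₀) w = 1 := hpart2 w (Or.inl hw)
        obtain ⟨u', hu'I, htu', hq'⟩ := hw
        have hh' : ∀ j, 0 < t₀ - u' j := fun j => sub_pos.mpr (hu'I j).2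
        have hev : ∀ᶠ j in atTop, t₀ - u' j < t₂ - t₀ := by
          have h0 : Tendsto (fun j => t₀ - u' j) atTop (nhds 0) := by
            simpa using (tendsto_const_nhds (x := t₀)).sub htu'
          exact h0.eventually_lt_const (by linarith)
        obtain ⟨N, hN⟩ := eventually_atTop.mp hev
        set p : ℕ → ℝ := fun k => t₀ + (t₀ - u' (k + N)) with hpdef
        set h : ℕ → ℝ := fun k => t₀ - u' (k + N) with hhdef
        have hhk : ∀ k, 0 < h k := fun k => hh' (k + N)
        have hpI : ∀ k, p k ∈ I ∧ t₀ < p k := by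
          intro k
          have h1 := hN (k + N) (Nat.le_add_left N k)
          constructor
          · apply hI.out ht₀ ht₂I
            constructor
            · simp only [hpdef]; linarith [hh' (k + N)]
            · simp only [hpdef]; linarith [hh' (k + N)]
          · simp only [hpdef]; linarith [hh' (k + N)]
        have hh0 : Tendsto h atTop (nhds 0) := by
          have := (tendsto_const_nhds (x := t₀) (f := atTop (α := ℕ))).sub (tendsto_shift htu' N)
          simpa [hhdef] using this
        have htp : Tendsto p atTop (nhds t₀) := by
          have := (tendsto_const_nhds (x := t₀) (f := atTop (α := ℕ))).add hh0
          simpa [hpdef, hhdef] using this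
        have hd2 : ∀ k, finslerDist F M (α (u' (k + N))) (α (p k)) = 2 * h k := by
          intro k
          rw [hd (u' (k + N)) (hu'I (k + N)).1 (p k) (hpI k).1
            (by linarith [(hpI k).2, (hu'I (k + N)).2])]
          simp only [hpdef, hhdef]; ring
        have hq1 : Tendsto (fun k => (h k)⁻¹ • (α t₀ - α (u' (k + N)))) atTop (nhds w) := by
          have := tendsto_shift hq' N
          apply this.congr
          intro k
          rw [hflip (u' (k + N)) t₀ (α (u' (k + N))) (α t₀)]
        have hq2 : Tendsto (fun k => (h k)⁻¹ • (α (p k) - α t₀)) atTop (nhds V) := by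
          have hpmem : Tendsto p atTop (nhdsWithin t₀ (I ∩ Ioi t₀)) :=
            tendsto_nhdsWithin_of_tendsto_nhds_of_eventually_within p htp
              (Eventually.of_forall (fun k => ⟨(hpI k).1, (hpI k).2⟩))
          have h2 : Tendsto (fun k => slope α t₀ (p k)) atTop (nhds V) := hslopeR.comp hpmem
          apply h2.congr
          intro k
          rw [slope_def_module]
          rw [show p k - t₀ = h k by simp only [hpdef, hhdef]; ring]
        have hqsum : Tendsto (fun k => (h k)⁻¹ • (α (p k) - α (u' (k + N)))) atTop
            (nhds (w + V)) := by
          have := hq1.add hq2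
          apply this.congr
          intro k
          rw [← smul_add]
          congr 1
          abel
        have hau : Tendsto (fun k => α (u' (k + N))) atTop (nhds (α t₀)) := by
          apply halim (fun k => u' (k + N)) w (fun k => ne_of_lt (hu'I (k + N)).2)
            (tendsto_shift htu' N)
          exact tendsto_shift hq' N
        have hap : Tendsto (fun k => α (p k)) atTop (nhds (α t₀)) := by
          apply halim p V (fun k => ne_of_gt (hpI k).2) htp
          have := hq2.congr (fun k => by
            rw [show (h k)⁻¹ • (α (p k) - α t₀) = (p k - t₀)⁻¹ • (α (p k) - α t₀) by
              rw [show p k - t₀ = h k by simp only [hpdef, hhdef]; ring]])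
          exact this
        have hFsum : F (α t₀) (w + V) = 2 :=
          dist_ratio hF hMconv (α t₀) hc hcb (fun k => hM _ (hu'I (k + N)).1)
            (fun k => hM _ (hpI k).1) hau hap hhk hh0 hd2 hqsum
        have := velocity_eq hF (α t₀) w V hFw hFV (by rw [hFsum])
        exact this
      have hslopeL : Tendsto (slope α t₀) (nhdsWithin t₀ (I ∩ Iio t₀)) (nhds V) :=
        slope_tendsto_left hc hLip harr_eq
      have hVdL : HasDerivWithinAt α V (I ∩ Iic t₀) t₀ := by
        rw [hasDerivWithinAt_iff_tendsto_slope, hset1]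
        exact hslopeL
      exact (((hVdL.union hVd).mono hIsub)).differentiableWithinAt
  exact ⟨⟨hpart1L, hpart1R⟩, hpart2, hpart3⟩
end
end
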